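/- arXiv:2212.02558 — 7 statements merged into one kernel-verified Lean document; each statement's English description precedes it below -/
import Mathlib

section
/- Let d ≥ 3 and 1 ≤ k ≤ d−2 be integers, let p be an IDF prime for (d,k), and let r be the unique integer with 0 ≤ r ≤ k and p ∣ d−r. Then the coefficients b_0, …, b_k of the normalized dynamical Belyi polynomial B_{d,k} satisfy v_p(b_r) = 0 and, for every index i with 0 ≤ i ≤ k and i ≠ r, v_p(b_i) = v_p(d−r) > 0. In particular, every b_i is p-integral and B_{d,k} is congruent modulo p to the monomial b_r·z^{d−r}. -/
open Finset Function

/-- The coefficient `b_i` of `z^(d-i)` in the normalized dynamical Belyi polynomial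
`B_{d,k}`. -/
def belyiCoeff (d k i : ℕ) : ℚ :=
  ((-1 : ℚ) ^ (k - i) / ((k - i).factorial * i.factorial)) *
    ∏ j ∈ (Finset.range (k + 1)).erase i, ((d : ℚ) - (j : ℚ))

/-- The normalized dynamical Belyi polynomial `B_{d,k}` as a function on `ℚ`. -/
def belyi (d k : ℕ) (z : ℚ) : ℚ :=
  ∑ i ∈ Finset.range (k + 1), belyiCoeff d k i * z ^ (d - i)

/-- The map `f_{a,c}(z) = a · B_{d,k}(z) + c`. -/
def belyiMap (d k : ℕ) (a c z : ℚ) : ℚ := a * belyi d k z + c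

/-- `p` is an index divisor free (IDF) prime for the pair `(d,k)`:
`p` is a prime with `p > k`, `p ∣ d - r` for some `r ≤ k`, and `r ∤ v_p(d-r)`. -/
def IsIDFPrime (d k p : ℕ) : Prop :=
  p.Prime ∧ k < p ∧ ∃ r ≤ k, p ∣ (d - r) ∧ ¬ (r ∣ padicValNat p (d - r))

/-- A rational number is `p`-integral if it is zero or has nonnegative `p`-adic valuation. -/
def PIntegral (p : ℕ) (x : ℚ) : Prop := x = 0 ∨ 0 ≤ padicValRat p x

private lemma padicValRat_prod (p : ℕ) [hp : Fact p.Prime] (s : Finset ℕ) (f : ℕ → ℚ)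
    (h : ∀ j ∈ s, f j ≠ 0) :
    padicValRat p (∏ j ∈ s, f j) = ∑ j ∈ s, padicValRat p (f j) := by
  induction s using Finset.cons_induction with
  | empty => simp
  | cons a s ha ih =>
    rw [Finset.prod_cons, Finset.sum_cons,
      padicValRat.mul (h a (mem_cons_self a s))
        (Finset.prod_ne_zero_iff.mpr fun j hj => h j (mem_cons_of_mem hj)),
      ih fun j hj => h j (mem_cons_of_mem hj)]

private lemma key (d k p r : ℕ) [hp : Fact p.Prime] (hd : 3 ≤ d) (hk2 : k ≤ d - 2)
    (hkp : k < p) (hr : r ≤ k) (hpr : p ∣ (d - r)) (i : ℕ) (hi : i ≤ k) :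
    belyiCoeff d k i ≠ 0 ∧ padicValRat p (belyiCoeff d k i) =
      if i = r then 0 else (padicValNat p (d - r) : ℤ) := by
  have hdk : k + 2 ≤ d := by omega
  -- each linear factor is a nonzero natural cast
  have hfac : ∀ j ∈ (Finset.range (k + 1)).erase i,
      ((d : ℚ) - (j : ℚ)) = ((d - j : ℕ) : ℚ) := by
    intro j hj
    have hjk : j ≤ k := by have := Finset.mem_range.mp (Finset.mem_of_mem_erase hj); omega
    rw [Nat.cast_sub (by omega)]
  have hne : ∀ j ∈ (Finset.range (k + 1)).erase i, ((d : ℚ) - (j : ℚ)) ≠ 0 := by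
    intro j hj
    have hjk : j ≤ k := by have := Finset.mem_range.mp (Finset.mem_of_mem_erase hj); omega
    rw [hfac j hj]
    have : 0 < d - j := by omega
    exact_mod_cast this.ne'
  -- the scalar is nonzero
  have hc : ((-1 : ℚ) ^ (k - i) / ((k - i).factorial * i.factorial)) ≠ 0 := by
    apply div_ne_zero
    · exact pow_ne_zero _ (by norm_num)
    · positivity
  have hP : (∏ j ∈ (Finset.range (k + 1)).erase i, ((d : ℚ) - (j : ℚ))) ≠ 0 :=
    Finset.prod_ne_zero_iff.mpr hne
  refine ⟨mul_ne_zero hc hP, ?_⟩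
  rw [belyiCoeff, padicValRat.mul hc hP]
  -- valuation of scalar is 0
  have hvfact : ∀ m ≤ k, padicValNat p m.factorial = 0 := by
    intro m hm
    exact padicValNat.eq_zero_of_not_dvd (fun h =>
      absurd ((Nat.Prime.dvd_factorial hp.out).mp h) (by omega))
  have hvc : padicValRat p ((-1 : ℚ) ^ (k - i) / ((k - i).factorial * i.factorial)) = 0 := by
    rw [padicValRat.div (pow_ne_zero _ (by norm_num)) (by positivity)]
    have h1 : padicValRat p ((-1 : ℚ) ^ (k - i)) = 0 := by
      rcases Nat.even_or_odd (k - i) with he | ho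
      · rw [he.neg_one_pow, padicValRat.one]
      · rw [ho.neg_one_pow, padicValRat.neg, padicValRat.one]
    have h2 : (((k - i).factorial : ℚ) * (i.factorial : ℚ)) = (((k - i).factorial * i.factorial : ℕ) : ℚ) := by
      push_cast; ring
    rw [h1, h2, padicValRat.of_nat,
      padicValNat.mul (Nat.factorial_ne_zero _) (Nat.factorial_ne_zero _),
      hvfact _ (by omega), hvfact i hi]
    simp
  rw [hvc, padicValRat_prod p _ _ hne, zero_add]
  -- valuation of each factor
  have hvterm : ∀ j ∈ (Finset.range (k + 1)).erase i,
      padicValRat p ((d : ℚ) - (j : ℚ)) =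
        if j = r then (padicValNat p (d - r) : ℤ) else 0 := by
    intro j hj
    have hjk : j ≤ k := by have := Finset.mem_range.mp (Finset.mem_of_mem_erase hj); omega
    rw [hfac j hj, padicValRat.of_nat]
    by_cases hjr : j = r
    · simp [hjr]
    · rw [if_neg hjr]
      have hndvd : ¬ p ∣ (d - j) := by
        intro hdj
        have h1 : (p : ℤ) ∣ ((d : ℤ) - j) := by
          have := Int.natCast_dvd_natCast.mpr hdj
          rwa [Nat.cast_sub (by omega)] at this
        have h2 : (p : ℤ) ∣ ((d : ℤ) - r) := by
          have := Int.natCast_dvd_natCast.mpr hpr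
          rwa [Nat.cast_sub (by omega)] at this
        have h3 : (p : ℤ) ∣ ((r : ℤ) - j) := by
          have := dvd_sub h1 h2; simpa using this
        have h4 : p ∣ ((r : ℤ) - j).natAbs :=
          Int.natCast_dvd_natCast.mp (Int.dvd_natAbs.mpr h3)
        have h5 : ((r : ℤ) - j).natAbs ≠ 0 := by omega
        have := Nat.le_of_dvd (by omega) h4
        omega
      rw [padicValNat.eq_zero_of_not_dvd hndvd]
      simp
  rw [Finset.sum_congr rfl hvterm]
  by_cases hir : i = r
  · rw [if_pos hir, Finset.sum_eq_zero]
    intro j hj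
    have : j ≠ r := by
      have := Finset.ne_of_mem_erase hj; omega
    simp [this]
  · rw [if_neg hir, Finset.sum_eq_single_of_mem r
      (Finset.mem_erase.mpr ⟨fun h => hir h.symm, Finset.mem_range.mpr (by omega)⟩)]
    · simp
    · intro j _ hjr; simp [hjr]

/-- Valuations of the coefficients of the Belyi polynomial at an IDF prime:
`v_p(b_r) = 0`, and for `i ≠ r`, `v_p(b_i) = v_p(d-r) > 0`.  In particular every `b_i` is
`p`-integral and `B_{d,k}` is congruent modulo `p` to the monomial `b_r · z^(d-r)`
(i.e. all other coefficients have positive valuation). -/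
theorem belyiCoeff_padicVal (d k p r : ℕ) (hd : 3 ≤ d) (hk1 : 1 ≤ k) (hk2 : k ≤ d - 2)
    (hp : IsIDFPrime d k p) (hr : r ≤ k) (hpr : p ∣ (d - r))
    (hidf : ¬ (r ∣ padicValNat p (d - r))) :
    (belyiCoeff d k r ≠ 0 ∧ padicValRat p (belyiCoeff d k r) = 0) ∧
    0 < padicValNat p (d - r) ∧
    (∀ i ≤ k, i ≠ r → belyiCoeff d k i ≠ 0 ∧
      padicValRat p (belyiCoeff d k i) = (padicValNat p (d - r) : ℤ)) ∧
    (∀ i ≤ k, PIntegral p (belyiCoeff d k i)) ∧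
    (∀ i ≤ k, i ≠ r → 0 < padicValRat p (belyiCoeff d k i)) := by
  obtain ⟨hpp, hkp, -⟩ := hp
  haveI : Fact p.Prime := ⟨hpp⟩
  have hpos : 0 < padicValNat p (d - r) :=
    one_le_padicValNat_of_dvd (by omega) hpr
  have hkey := fun i hi => key d k p r hd hk2 hkp hr hpr i hi
  refine ⟨⟨(hkey r hr).1, by simpa using (hkey r hr).2⟩, hpos, ?_, ?_, ?_⟩
  · intro i hi hir
    refine ⟨(hkey i hi).1, ?_⟩
    have := (hkey i hi).2
    rwa [if_neg hir] at this
  · intro i hi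
    right
    rcases eq_or_ne i r with h | h
    · subst h
      simp [(hkey i hi).2]
    · have := (hkey i hi).2
      rw [if_neg h] at this
      rw [this]
      exact_mod_cast Nat.zero_le _
  · intro i hi hir
    have := (hkey i hi).2
    rw [if_neg hir] at this
    rw [this]
    exact_mod_cast hpos
end

section
/- Let d ≥ 3 and 1 ≤ k ≤ d−2 be integers, let p be an IDF prime for (d,k), and let r be the unique integer with 0 ≤ r ≤ k and p ∣ d−r. Let α, β, x be rational numbers with α ≠ 0, β ≠ 0, x ≠ 0 and v_p(x) = 0. If f_{α,β}(x) ≠ 0, then v_p(f_{α,β}(x)) ≥ min{v_p(α), v_p(β)}. Moreover, if min{v_p(α), v_p(β)} is attained by exactly one of v_p(α), v_p(β) and is strictly smaller than v_p(α) + v_p(d−r), then f_{α,β}(x) ≠ 0 and v_p(f_{α,β}(x)) = min{v_p(α), v_p(β)}. -/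
open Finset Function

/-! The coefficient `b_r` of `B_{d,k}` is a `p`-adic unit: its sign and factorials are units
because `p > k`, and its factors `d - j` (`j ≠ r`) are units because `d ≡ r [MOD p]` while
`0 < |j - r| < p`. Every other `b_i` contains the factor `d - r` and no other multiple of `p`,
so `v_p(b_i) = v_p(d - r) ≥ 1`. Hence `B_{d,k}(x)` is a unit whenever `x` is, so
`v_p(α B_{d,k}(x)) = v_p(α)`, and both claims are the ultrametric inequality for
`α B_{d,k}(x) + β` and its equality case. -/

theorem Nat.lt_of_lt_of_dvd_sub {k p d r : ℕ} (hkp : k < p) (hrd : r < d) (hpr : p ∣ d - r) :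
    k < d := by
  have := Nat.le_of_dvd (Nat.sub_pos_of_lt hrd) hpr
  omega

theorem padicValRat.add_ne_zero_of_ne {p : ℕ} {q r : ℚ}
    (hval : padicValRat p q ≠ padicValRat p r) : q + r ≠ 0 :=
  fun h => hval <| by rw [eq_neg_of_add_eq_zero_right h, padicValRat.neg]

theorem padicValRat_natCast_sub {p d j : ℕ} (hjd : j ≤ d) :
    padicValRat p ((d : ℚ) - j) = padicValNat p (d - j) := by
  rw [← Nat.cast_sub hjd, padicValRat.of_nat]

theorem padicValNat_sub_eq_zero_of_ne {p d r j : ℕ} (hjp : j < p) (hrp : r < p) (hjd : j ≤ d)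
    (hrd : r ≤ d) (hpr : p ∣ d - r) (hjr : j ≠ r) : padicValNat p (d - j) = 0 := by
  refine padicValNat.eq_zero_of_not_dvd fun hpj => hjr ?_
  have hmod : j ≡ r [MOD p] :=
    ((Nat.modEq_iff_dvd' hjd).2 hpj).trans ((Nat.modEq_iff_dvd' hrd).2 hpr).symm
  exact hmod.eq_of_lt_of_lt hjp hrp

namespace padicValRat

variable {p : ℕ} [Fact p.Prime]

theorem finset_prod {ι : Type*} (S : Finset ι) (F : ι → ℚ) (hF : ∀ i ∈ S, F i ≠ 0) :
    padicValRat p (∏ i ∈ S, F i) = ∑ i ∈ S, padicValRat p (F i) := by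
  classical
  induction S using Finset.induction with
  | empty => simp
  | insert a S ha ih =>
    rw [Finset.forall_mem_insert] at hF
    rw [Finset.prod_insert ha, Finset.sum_insert ha,
      padicValRat.mul hF.1 (Finset.prod_ne_zero_iff.2 hF.2), ih hF.2]

theorem le_finset_sum {ι : Type*} (S : Finset ι) (F : ι → ℚ) {c : ℤ}
    (hF : ∀ i ∈ S, c ≤ padicValRat p (F i)) (hS : ∑ i ∈ S, F i ≠ 0) :
    c ≤ padicValRat p (∑ i ∈ S, F i) := by
  classical
  induction S using Finset.induction with
  | empty => simp at hS
  | insert a S ha ih =>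
    rw [Finset.forall_mem_insert] at hF
    rw [Finset.sum_insert ha] at hS ⊢
    by_cases hS' : ∑ i ∈ S, F i = 0
    · simpa [hS'] using hF.1
    · exact (le_min hF.1 (ih hF.2 hS')).trans (min_le_padicValRat_add hS)

theorem finset_sum_eq_of_lt {ι : Type*} [DecidableEq ι] {S : Finset ι} {F : ι → ℚ} {j : ι}
    (hj : j ∈ S) (hFj : F j ≠ 0)
    (hlt : ∀ i ∈ S.erase j, padicValRat p (F j) < padicValRat p (F i)) :
    ∑ i ∈ S, F i ≠ 0 ∧ padicValRat p (∑ i ∈ S, F i) = padicValRat p (F j) := by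
  rw [← Finset.add_sum_erase S F hj]
  set R := ∑ i ∈ S.erase j, F i
  by_cases hR : R = 0
  · simp [hR, hFj]
  have hvR : padicValRat p (F j) < padicValRat p R :=
    le_finset_sum _ F (fun i hi => Int.add_one_le_of_lt (hlt i hi)) hR
  exact ⟨add_ne_zero_of_ne hvR.ne, add_eq_of_lt (add_ne_zero_of_ne hvR.ne) hFj hR hvR⟩

theorem natCast_factorial_eq_zero {n : ℕ} (hn : n < p) :
    padicValRat p (n.factorial : ℚ) = 0 := by
  rw [padicValRat.of_nat, padicValNat.eq_zero_of_not_dvd, Nat.cast_zero]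
  rw [(Fact.out : p.Prime).dvd_factorial]
  omega

end padicValRat

section Belyi

variable {d k : ℕ}

theorem prod_natCast_sub_ne_zero (i : ℕ) (hkd : k < d) :
    ∏ j ∈ (range (k + 1)).erase i, ((d : ℚ) - j) ≠ 0 := by
  refine Finset.prod_ne_zero_iff.2 fun j hj => sub_ne_zero.2 ?_
  have : j < d := by simp only [mem_erase, mem_range] at hj; omega
  exact_mod_cast this.ne'

theorem belyiCoeff_ne_zero (i : ℕ) (hkd : k < d) : belyiCoeff d k i ≠ 0 :=
  mul_ne_zero (by positivity) (prod_natCast_sub_ne_zero i hkd)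

variable {p r : ℕ} [Fact p.Prime]

theorem padicValRat_belyiCoeff {i : ℕ} (hkp : k < p) (hrk : r ≤ k) (hrd : r < d)
    (hpr : p ∣ d - r) (hik : i ≤ k) :
    padicValRat p (belyiCoeff d k i) = if i = r then 0 else (padicValNat p (d - r) : ℤ) := by
  have hkd : k < d := Nat.lt_of_lt_of_dvd_sub hkp hrd hpr
  have hunit : padicValRat p ((-1 : ℚ) ^ (k - i) / ((k - i).factorial * i.factorial)) = 0 := by
    rw [padicValRat.div (by positivity) (by positivity),
      padicValRat.mul (by positivity) (by positivity), padicValRat.pow, padicValRat.neg,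
      padicValRat.one, padicValRat.natCast_factorial_eq_zero (by omega),
      padicValRat.natCast_factorial_eq_zero (by omega)]
    simp
  have hfactor : ∀ j ∈ (range (k + 1)).erase i,
      padicValRat p ((d : ℚ) - j) = if j = r then (padicValNat p (d - r) : ℤ) else 0 := by
    intro j hj
    simp only [mem_erase, mem_range] at hj
    rw [padicValRat_natCast_sub (by omega)]
    split_ifs with hjr
    · rw [hjr]
    · rw [padicValNat_sub_eq_zero_of_ne (by omega) (by omega) (by omega) hrd.le hpr hjr,
        Nat.cast_zero]
  have hprod := prod_natCast_sub_ne_zero i hkd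
  rw [belyiCoeff, padicValRat.mul (by positivity) hprod, hunit, zero_add,
    padicValRat.finset_prod _ _ (Finset.prod_ne_zero_iff.1 hprod), Finset.sum_congr rfl hfactor,
    Finset.sum_ite_eq']
  simp only [mem_erase, mem_range]
  split_ifs <;> omega

theorem padicValRat_belyi (hkp : k < p) (hrk : r ≤ k) (hrd : r < d) (hpr : p ∣ d - r) {x : ℚ}
    (hx : x ≠ 0) (hvx : padicValRat p x = 0) :
    belyi d k x ≠ 0 ∧ padicValRat p (belyi d k x) = 0 := by
  have hkd : k < d := Nat.lt_of_lt_of_dvd_sub hkp hrd hpr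
  have hterm : ∀ i ≤ k,
      padicValRat p (belyiCoeff d k i * x ^ (d - i)) =
        if i = r then 0 else (padicValNat p (d - r) : ℤ) := by
    intro i hik
    rw [padicValRat.mul (belyiCoeff_ne_zero i hkd) (pow_ne_zero _ hx), padicValRat.pow, hvx,
      mul_zero, add_zero, padicValRat_belyiCoeff hkp hrk hrd hpr hik]
  have hvdr : 1 ≤ padicValNat p (d - r) := one_le_padicValNat_of_dvd (by omega) hpr
  have hsum := padicValRat.finset_sum_eq_of_lt (p := p)
    (F := fun i => belyiCoeff d k i * x ^ (d - i)) (mem_range.2 (Nat.lt_succ_of_le hrk))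
    (mul_ne_zero (belyiCoeff_ne_zero r hkd) (pow_ne_zero _ hx)) fun i hi => ?_
  · rwa [hterm r hrk, if_pos rfl] at hsum
  · simp only [mem_erase, mem_range] at hi
    rw [hterm r hrk, hterm i (by omega), if_pos rfl, if_neg hi.1]
    exact_mod_cast hvdr

end Belyi

theorem padicValRat_belyiMap_of_val_eq_zero_general (d k p r : ℕ)
    (hp : IsIDFPrime d k p) (hr : r ≤ k) (hpr : p ∣ (d - r))
    (hidf : ¬ (r ∣ padicValNat p (d - r)))
    (α β x : ℚ) (hα : α ≠ 0) (hβ : β ≠ 0) (hx : x ≠ 0)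
    (hvx : padicValRat p x = 0) :
    (belyiMap d k α β x ≠ 0 →
      min (padicValRat p α) (padicValRat p β) ≤ padicValRat p (belyiMap d k α β x)) ∧
    (padicValRat p α ≠ padicValRat p β →
      min (padicValRat p α) (padicValRat p β) <
        padicValRat p α + (padicValNat p (d - r) : ℤ) →
      belyiMap d k α β x ≠ 0 ∧
        padicValRat p (belyiMap d k α β x) =
          min (padicValRat p α) (padicValRat p β)) := by
  obtain ⟨hprime, hkp, -⟩ := hp
  have : Fact p.Prime := ⟨hprime⟩
  have hrd : r < d := by
    by_contra! hdr
    exact hidf (by simp [Nat.sub_eq_zero_of_le hdr])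
  obtain ⟨hB, hvB⟩ := padicValRat_belyi hkp hr hrd hpr hx hvx
  have hvαB : padicValRat p (α * belyi d k x) = padicValRat p α := by
    rw [padicValRat.mul hα hB, hvB, add_zero]
  refine ⟨fun hf => ?_, fun hne _ => ?_⟩
  · simpa [belyiMap, hvαB] using padicValRat.min_le_padicValRat_add (p := p) hf
  · rw [← hvαB] at hne
    have hf := padicValRat.add_ne_zero_of_ne hne
    exact ⟨hf, by rw [belyiMap, padicValRat.add_eq_min hf (mul_ne_zero hα hB) hβ hne, hvαB]⟩

/-- Valuation of the image of a point with valuation zero under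
`f_{α,β}`. -/
theorem padicValRat_belyiMap_of_val_eq_zero (d k p r : ℕ) (hd : 3 ≤ d) (hk1 : 1 ≤ k)
    (hk2 : k ≤ d - 2) (hp : IsIDFPrime d k p) (hr : r ≤ k) (hpr : p ∣ (d - r))
    (hidf : ¬ (r ∣ padicValNat p (d - r)))
    (α β x : ℚ) (hα : α ≠ 0) (hβ : β ≠ 0) (hx : x ≠ 0)
    (hvx : padicValRat p x = 0) :
    (belyiMap d k α β x ≠ 0 →
      min (padicValRat p α) (padicValRat p β) ≤ padicValRat p (belyiMap d k α β x)) ∧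
    (padicValRat p α ≠ padicValRat p β →
      min (padicValRat p α) (padicValRat p β) <
        padicValRat p α + (padicValNat p (d - r) : ℤ) →
      belyiMap d k α β x ≠ 0 ∧
        padicValRat p (belyiMap d k α β x) =
          min (padicValRat p α) (padicValRat p β)) :=
  padicValRat_belyiMap_of_val_eq_zero_general d k p r hp hr hpr hidf α β x hα hβ hx hvx
end

section
/- Let d ≥ 3 and 1 ≤ k ≤ d−2 be integers, let p be an IDF prime for (d,k), and let r be the unique integer with 0 ≤ r ≤ k and p ∣ d−r. Let α, β be nonzero rational numbers with v_p(β) < 0 < v_p(α) and min{v_p(α) + v_p(d−r) + d·v_p(β), v_p(α) + (d−r)·v_p(β)} = v_p(β). Let x, y be rational numbers such that x ≠ 0 with v_p(x) ≥ v_p(β), and such that y = 0 or v_p(y) ≥ v_p(α). Then for every integer n ≥ 0: (a) f^n_{α,β}(x) = 0 or v_p(f^n_{α,β}(x)) ≥ v_p(β); and (b) f^n_{α,β}(x+y) − f^n_{α,β}(x) = 0 or v_p(f^n_{α,β}(x+y) − f^n_{α,β}(x)) ≥ v_p(α). -/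
/-!
Let `|·|` be the `p`-adic norm and `R = |β| ≥ 1`. The hypothesis on the minimum implies that
every monomial `α b_i z^(d-i)` of `α B_{d,k}` has norm at most `R` on the ball `|z| ≤ R`: for
`i = r` this uses `|α| R^(d-r) ≤ R`, and for `i ≠ r` the coefficient `b_i` contains the factor
`d - r`, so `|α b_i| R^(d-i) ≤ |α| |d - r| R^d ≤ R`. By the ultrametric inequality `f_{α,β}`
then maps this ball into itself, and since `X^e - Y^e = (X - Y) Σ X^t Y^(e-1-t)` it is
`1`-Lipschitz there. Iterating, `|f^n(x)| ≤ |β|` and `|f^n(x+y) - f^n(x)| ≤ |y| ≤ |α|`.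
-/

open Finset Function

open IsAbsoluteValue (abv_pow)

theorem iterate_le_of_mapsTo {α β : Type*} [Preorder β] {f : α → α} {s : Set α}
    (D : α → α → β) (hs : Set.MapsTo f s s) (hf : ∀ x ∈ s, ∀ y ∈ s, D (f x) (f y) ≤ D x y)
    {x y : α} (hx : x ∈ s) (hy : y ∈ s) (n : ℕ) : D (f^[n] x) (f^[n] y) ≤ D x y := by
  induction n with
  | zero => exact le_rfl
  | succ n ih =>
    rw [iterate_succ_apply', iterate_succ_apply']
    exact (hf _ (hs.iterate n hx) _ (hs.iterate n hy)).trans ih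

section padicNorm

variable {p : ℕ} [Fact p.Prime]

theorem padicNorm_le_padicNorm_iff {a z : ℚ} (ha : a ≠ 0) :
    padicNorm p z ≤ padicNorm p a ↔ z = 0 ∨ padicValRat p a ≤ padicValRat p z := by
  rcases eq_or_ne z 0 with rfl | hz
  · simp [padicNorm.nonneg]
  have hp : (1 : ℚ) < p := by exact_mod_cast (Fact.out : p.Prime).one_lt
  rw [padicNorm.eq_zpow_of_nonzero hz, padicNorm.eq_zpow_of_nonzero ha,
    zpow_le_zpow_iff_right₀ hp, neg_le_neg_iff]
  simp [hz]

theorem padicNorm_mul_pow_le_iff {a b : ℚ} (ha : a ≠ 0) (hb : b ≠ 0) (m : ℕ) :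
    padicNorm p a * padicNorm p b ^ m ≤ padicNorm p b ↔
      padicValRat p b ≤ padicValRat p a + m * padicValRat p b := by
  rw [← abv_pow (padicNorm p), ← padicNorm.mul, padicNorm_le_padicNorm_iff hb,
    padicValRat.mul ha (pow_ne_zero _ hb), padicValRat.pow]
  simp [ha, hb]

-- Multiplied through by `R` so that `e = 0` needs no separate statement with `R ^ (e - 1)`.
theorem padicNorm_pow_sub_pow_mul_le {R X Y : ℚ} (hX : padicNorm p X ≤ R)
    (hY : padicNorm p Y ≤ R) (e : ℕ) :
    padicNorm p (X ^ e - Y ^ e) * R ≤ R ^ e * padicNorm p (X - Y) := by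
  cases e with
  | zero => simp [padicNorm.nonneg]
  | succ e =>
    have hR : 0 ≤ R := (padicNorm.nonneg X).trans hX
    have hgeom : padicNorm p (∑ t ∈ range (e + 1), X ^ t * Y ^ (e - t)) ≤ R ^ e := by
      refine padicNorm.sum_le' (fun t ht => ?_) (by positivity)
      rw [padicNorm.mul, abv_pow (padicNorm p), abv_pow (padicNorm p),
        ← pow_mul_pow_sub R (mem_range_succ_iff.mp ht)]
      exact mul_le_mul (pow_le_pow_left₀ (padicNorm.nonneg _) hX t)
        (pow_le_pow_left₀ (padicNorm.nonneg _) hY _) (pow_nonneg (padicNorm.nonneg _) _)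
        (pow_nonneg hR t)
    rw [← geom_sum₂_mul, add_tsub_cancel_right, padicNorm.mul, pow_succ]
    calc padicNorm p (∑ t ∈ range (e + 1), X ^ t * Y ^ (e - t)) * padicNorm p (X - Y) * R
        ≤ R ^ e * padicNorm p (X - Y) * R := by gcongr; exact padicNorm.nonneg _
      _ = R ^ e * R * padicNorm p (X - Y) := by ring

variable {ι : Type*} {s : Finset ι} {c : ι → ℚ} {e : ι → ℕ} {R : ℚ}

theorem padicNorm_sum_mul_pow_le (hc : ∀ i ∈ s, padicNorm p (c i) * R ^ e i ≤ R) {X : ℚ}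
    (hX : padicNorm p X ≤ R) : padicNorm p (∑ i ∈ s, c i * X ^ e i) ≤ R := by
  refine padicNorm.sum_le' (fun i hi => ?_) ((padicNorm.nonneg X).trans hX)
  rw [padicNorm.mul, abv_pow (padicNorm p)]
  exact (mul_le_mul_of_nonneg_left (pow_le_pow_left₀ (padicNorm.nonneg X) hX _)
    (padicNorm.nonneg _)).trans (hc i hi)

theorem padicNorm_sum_mul_pow_sub_le (hR : 0 < R)
    (hc : ∀ i ∈ s, padicNorm p (c i) * R ^ e i ≤ R) {X Y : ℚ} (hX : padicNorm p X ≤ R)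
    (hY : padicNorm p Y ≤ R) :
    padicNorm p (∑ i ∈ s, c i * X ^ e i - ∑ i ∈ s, c i * Y ^ e i) ≤ padicNorm p (X - Y) := by
  rw [← sum_sub_distrib]
  refine padicNorm.sum_le' (fun i hi => le_of_mul_le_mul_right ?_ hR) (padicNorm.nonneg _)
  rw [← mul_sub, padicNorm.mul]
  calc padicNorm p (c i) * padicNorm p (X ^ e i - Y ^ e i) * R
      ≤ padicNorm p (c i) * (R ^ e i * padicNorm p (X - Y)) := by
        rw [mul_assoc]
        exact mul_le_mul_of_nonneg_left (padicNorm_pow_sub_pow_mul_le hX hY _)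
          (padicNorm.nonneg _)
    _ = padicNorm p (c i) * R ^ e i * padicNorm p (X - Y) := by ring
    _ ≤ R * padicNorm p (X - Y) := by gcongr; exacts [padicNorm.nonneg _, hc i hi]
    _ = padicNorm p (X - Y) * R := mul_comm _ _

end padicNorm

section belyi

variable {p d k i : ℕ} [Fact p.Prime]

theorem padicNorm_belyiCoeff (hkp : k < p) (hi : i ≤ k) :
    padicNorm p (belyiCoeff d k i) =
      padicNorm p (∏ j ∈ (range (k + 1)).erase i, ((d : ℚ) - j)) := by
  have hfact : ∀ n < p, padicNorm p (n.factorial : ℚ) = 1 := fun n hn =>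
    (padicNorm.nat_eq_one_iff _).mpr fun h => by
      rw [(Fact.out : p.Prime).dvd_factorial] at h; omega
  rw [belyiCoeff, padicNorm.mul, padicNorm.div, padicNorm.mul, abv_pow (padicNorm p),
    padicNorm.neg, padicNorm.one, hfact _ (by omega), hfact _ (by omega)]
  simp

theorem padicNorm_belyiCoeff_le_one (hkp : k < p) (hi : i ≤ k) :
    padicNorm p (belyiCoeff d k i) ≤ 1 := by
  rw [padicNorm_belyiCoeff hkp hi]
  exact_mod_cast padicNorm.of_int (∏ j ∈ (range (k + 1)).erase i, ((d : ℤ) - j))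

theorem padicNorm_belyiCoeff_le {r : ℕ} (hkp : k < p) (hi : i ≤ k) (hr : r ≤ k)
    (hir : i ≠ r) :
    padicNorm p (belyiCoeff d k i) ≤ padicNorm p ((d : ℚ) - r) := by
  rw [padicNorm_belyiCoeff hkp hi,
    ← mul_prod_erase _ _ (mem_erase.mpr ⟨hir.symm, mem_range_succ_iff.mpr hr⟩), padicNorm.mul]
  refine mul_le_of_le_one_right (padicNorm.nonneg _) ?_
  exact_mod_cast padicNorm.of_int (∏ j ∈ ((range (k + 1)).erase i).erase r, ((d : ℤ) - j))

theorem padicNorm_mul_belyiCoeff_mul_pow_le {r : ℕ} {α R : ℚ} (hkp : k < p) (hr : r ≤ k)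
    (hi : i ≤ k) (hR : 1 ≤ R) (h₁ : padicNorm p (α * ((d : ℚ) - r)) * R ^ d ≤ R)
    (h₂ : padicNorm p α * R ^ (d - r) ≤ R) :
    padicNorm p (α * belyiCoeff d k i) * R ^ (d - i) ≤ R := by
  rw [padicNorm.mul]
  rcases eq_or_ne i r with rfl | hir
  · calc padicNorm p α * padicNorm p (belyiCoeff d k i) * R ^ (d - i)
        ≤ padicNorm p α * 1 * R ^ (d - i) := by
          gcongr
          exacts [padicNorm.nonneg _, padicNorm_belyiCoeff_le_one hkp hi]
      _ ≤ R := by rwa [mul_one]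
  · calc padicNorm p α * padicNorm p (belyiCoeff d k i) * R ^ (d - i)
        ≤ padicNorm p α * padicNorm p ((d : ℚ) - r) * R ^ d :=
          mul_le_mul
            (mul_le_mul_of_nonneg_left (padicNorm_belyiCoeff_le hkp hi hr hir)
              (padicNorm.nonneg _))
            (pow_le_pow_right₀ hR (Nat.sub_le d i)) (by positivity)
            (mul_nonneg (padicNorm.nonneg _) (padicNorm.nonneg _))
      _ ≤ R := by rwa [← padicNorm.mul]

theorem padicNorm_mul_belyiCoeff_mul_pow_le_of_min {r : ℕ} {α β : ℚ} (hkp : k < p)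
    (hr : r ≤ k) (hrd : r < d) (hα : α ≠ 0) (hβ : β ≠ 0) (hvβ : padicValRat p β ≤ 0)
    (hmin : min (padicValRat p α + (padicValNat p (d - r) : ℤ) + (d : ℤ) * padicValRat p β)
        (padicValRat p α + ((d : ℤ) - (r : ℤ)) * padicValRat p β) = padicValRat p β) :
    ∀ i ∈ range (k + 1),
      padicNorm p (α * belyiCoeff d k i) * padicNorm p β ^ (d - i) ≤ padicNorm p β := by
  have hdr : (d : ℚ) - r ≠ 0 := by
    rw [← Nat.cast_sub hrd.le]; exact_mod_cast (by omega : d - r ≠ 0)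
  have hR : 1 ≤ padicNorm p β := by
    rw [← padicNorm.one (p := p), padicNorm_le_padicNorm_iff hβ, padicValRat.one]
    exact Or.inr hvβ
  refine fun i hi =>
    padicNorm_mul_belyiCoeff_mul_pow_le hkp hr (mem_range_succ_iff.mp hi) hR ?_ ?_
  · rw [padicNorm_mul_pow_le_iff (mul_ne_zero hα hdr) hβ, padicValRat.mul hα hdr,
      ← Nat.cast_sub hrd.le, padicValRat.of_nat]
    exact hmin.symm.trans_le (min_le_left _ _)
  · rw [padicNorm_mul_pow_le_iff hα hβ, Nat.cast_sub hrd.le]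
    exact hmin.symm.trans_le (min_le_right _ _)

theorem belyiMap_eq_sum (α β z : ℚ) :
    belyiMap d k α β z = ∑ i ∈ range (k + 1), α * belyiCoeff d k i * z ^ (d - i) + β := by
  simp only [belyiMap, belyi, mul_sum, mul_assoc]

variable {α β : ℚ}

theorem padicNorm_belyiMap_le (hc : ∀ i ∈ range (k + 1),
      padicNorm p (α * belyiCoeff d k i) * padicNorm p β ^ (d - i) ≤ padicNorm p β)
    {X : ℚ} (hX : padicNorm p X ≤ padicNorm p β) :
    padicNorm p (belyiMap d k α β X) ≤ padicNorm p β := by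
  rw [belyiMap_eq_sum]
  exact padicNorm.nonarchimedean.trans (max_le (padicNorm_sum_mul_pow_le hc hX) le_rfl)

theorem padicNorm_belyiMap_sub_le (hβ : β ≠ 0) (hc : ∀ i ∈ range (k + 1),
      padicNorm p (α * belyiCoeff d k i) * padicNorm p β ^ (d - i) ≤ padicNorm p β)
    {X Y : ℚ} (hX : padicNorm p X ≤ padicNorm p β) (hY : padicNorm p Y ≤ padicNorm p β) :
    padicNorm p (belyiMap d k α β X - belyiMap d k α β Y) ≤ padicNorm p (X - Y) := by
  rw [belyiMap_eq_sum, belyiMap_eq_sum, add_sub_add_right_eq_sub]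
  exact padicNorm_sum_mul_pow_sub_le
    ((padicNorm.nonneg β).lt_of_ne (padicNorm.nonzero hβ).symm) hc hX hY

end belyi

theorem padicValRat_belyiMap_iterate_general (d k p r : ℕ) (hd : 3 ≤ d)
    (hk2 : k ≤ d - 2) (hp : IsIDFPrime d k p) (hr : r ≤ k)
    (α β : ℚ) (hα : α ≠ 0) (hβ : β ≠ 0)
    (hvβ : padicValRat p β < 0) (hvα : 0 < padicValRat p α)
    (hmin : min (padicValRat p α + (padicValNat p (d - r) : ℤ) + (d : ℤ) * padicValRat p β)
        (padicValRat p α + ((d : ℤ) - (r : ℤ)) * padicValRat p β) = padicValRat p β)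
    (x y : ℚ) (hvx : padicValRat p β ≤ padicValRat p x)
    (hy : y = 0 ∨ padicValRat p α ≤ padicValRat p y) :
    ∀ n : ℕ,
      ((belyiMap d k α β)^[n] x = 0 ∨
        padicValRat p β ≤ padicValRat p ((belyiMap d k α β)^[n] x)) ∧
      ((belyiMap d k α β)^[n] (x + y) - (belyiMap d k α β)^[n] x = 0 ∨
        padicValRat p α ≤
          padicValRat p ((belyiMap d k α β)^[n] (x + y) - (belyiMap d k α β)^[n] x)) := by
  have : Fact p.Prime := ⟨hp.1⟩
  have hc := padicNorm_mul_belyiCoeff_mul_pow_le_of_min hp.2.1 hr (by omega) hα hβ hvβ.le hmin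
  set B := {z : ℚ | padicNorm p z ≤ padicNorm p β}
  have hmaps : Set.MapsTo (belyiMap d k α β) B B := fun X hX => padicNorm_belyiMap_le hc hX
  have hx : x ∈ B := (padicNorm_le_padicNorm_iff hβ).mpr (Or.inr hvx)
  have hyα : padicNorm p y ≤ padicNorm p α := (padicNorm_le_padicNorm_iff hα).mpr hy
  have hαβ : padicNorm p α ≤ padicNorm p β :=
    (padicNorm_le_padicNorm_iff hβ).mpr (Or.inr (hvβ.trans hvα).le)
  have hxy : x + y ∈ B := padicNorm.nonarchimedean.trans (max_le hx (hyα.trans hαβ))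
  intro n
  refine ⟨(padicNorm_le_padicNorm_iff hβ).mp (hmaps.iterate n hx),
    (padicNorm_le_padicNorm_iff hα).mp ?_⟩
  calc padicNorm p ((belyiMap d k α β)^[n] (x + y) - (belyiMap d k α β)^[n] x)
      ≤ padicNorm p (x + y - x) :=
        iterate_le_of_mapsTo (fun X Y => padicNorm p (X - Y)) hmaps
          (fun X hX Y hY => padicNorm_belyiMap_sub_le hβ hc hX hY) hxy hx n
    _ ≤ padicNorm p α := by rwa [add_sub_cancel_left]

/-- (Lemma on iterates, Case 4.iii setup.)  Under the stated valuation
hypotheses, for every `n ≥ 0`, the orbit `f^n_{α,β}(x)` has valuation at least `v_p(β)`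
(or vanishes) and the difference `f^n_{α,β}(x+y) − f^n_{α,β}(x)` has valuation at least
`v_p(α)` (or vanishes). -/
theorem padicValRat_belyiMap_iterate (d k p r : ℕ) (hd : 3 ≤ d) (hk1 : 1 ≤ k)
    (hk2 : k ≤ d - 2) (hp : IsIDFPrime d k p) (hr : r ≤ k) (hpr : p ∣ (d - r))
    (hidf : ¬ (r ∣ padicValNat p (d - r)))
    (α β : ℚ) (hα : α ≠ 0) (hβ : β ≠ 0)
    (hvβ : padicValRat p β < 0) (hvα : 0 < padicValRat p α)
    (hmin : min (padicValRat p α + (padicValNat p (d - r) : ℤ) + (d : ℤ) * padicValRat p β)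
        (padicValRat p α + ((d : ℤ) - (r : ℤ)) * padicValRat p β) = padicValRat p β)
    (x y : ℚ) (hx : x ≠ 0) (hvx : padicValRat p β ≤ padicValRat p x)
    (hy : y = 0 ∨ padicValRat p α ≤ padicValRat p y) :
    ∀ n : ℕ,
      ((belyiMap d k α β)^[n] x = 0 ∨
        padicValRat p β ≤ padicValRat p ((belyiMap d k α β)^[n] x)) ∧
      ((belyiMap d k α β)^[n] (x + y) - (belyiMap d k α β)^[n] x = 0 ∨
        padicValRat p α ≤
          padicValRat p ((belyiMap d k α β)^[n] (x + y) - (belyiMap d k α β)^[n] x)) :=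
  padicValRat_belyiMap_iterate_general d k p r hd hk2 hp hr α β hα hβ hvβ hvα hmin x y hvx hy
end

section
/- Let d ≥ 3 and 1 ≤ k ≤ ⌈(d−2)/2⌉ be integers and let p be an IDF prime for (d,k). Suppose α, β are rational numbers and n, m ≥ 1 are integers such that f^n_{α,β}(0) = 0 and f^m_{α,β}(1) = 1 (i.e., f_{α,β} is PCF with both critical points 0 and 1 periodic). Then α ≠ 0 with v_p(α) ≥ 0, and β = 0 or v_p(β) ≥ 0; that is, both α and β are p-integral. -/
/-!
Let `p` be the IDF prime, `p ∣ d - r`, and `e = v_p(d - r) ≥ 1`. Then `b_r` is a `p`-adic unit and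
every other coefficient `b_i` of `B_{d,k}` has norm `p^(-e)`. Since `r ∤ e`, for `|z|_p > 1` a
single term of `B_{d,k}(z)` dominates, so `|B_{d,k}(z)|_p = max(|z|^(d-r), p^(-e) |z|^d)` exactly.

If `|β| > 1`, either `|α| · max(|β|^(d-r), p^(-e) |β|^d) > |β|`, and the orbit of `0` escapes
through `f(0) = β` to norms `≥ |β|` and never returns to `0`; or `f` maps the ball of radius `|β|`
into itself without expanding distances while contracting the unit ball by the factor `|α| < 1`,
which is impossible for the periodic points `0` and `1` at distance `1`. If `|β| ≤ 1 < |α|`, then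
`|f(1)| = |α|` and the orbit of `1` escapes in the same way.
-/

open Finset Function

theorem Function.IsPeriodicPt.eq_of_forall_apply_eq {α : Type*} {f : α → α} {x c : α} {n : ℕ}
    (hx : IsPeriodicPt f n x) (hn : 0 < n) (hf : ∀ y, f y = c) : x = c := by
  obtain ⟨n, rfl⟩ := Nat.exists_eq_succ_of_ne_zero hn.ne'
  rw [← hx.eq, iterate_succ_apply', hf]

theorem Function.IsPeriodicPt.mem_of_mapsTo {α : Type*} {f : α → α} {s : Set α} {x : α} {n : ℕ}
    (hx : IsPeriodicPt f n x) (hn : 0 < n) (hs : Set.MapsTo f s s) (hfx : f x ∈ s) : x ∈ s := by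
  obtain ⟨n, rfl⟩ := Nat.exists_eq_succ_of_ne_zero hn.ne'
  rw [← hx.eq, iterate_succ_apply]
  exact hs.iterate n hfx

section Nonexpanding

variable {X : Type*} [PseudoMetricSpace X] {f : X → X} {s : Set X}

theorem dist_iterate_le_of_mapsTo (hs : Set.MapsTo f s s)
    (hf : ∀ x ∈ s, ∀ y ∈ s, dist (f x) (f y) ≤ dist x y) {x y : X} (hx : x ∈ s) (hy : y ∈ s)
    (n : ℕ) : dist (f^[n] x) (f^[n] y) ≤ dist x y := by
  induction n with
  | zero => exact le_rfl
  | succ n ih =>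
    rw [iterate_succ_apply', iterate_succ_apply']
    exact (hf _ (hs.iterate n hx) _ (hs.iterate n hy)).trans ih

theorem Function.IsPeriodicPt.dist_le_dist_apply (hs : Set.MapsTo f s s)
    (hf : ∀ x ∈ s, ∀ y ∈ s, dist (f x) (f y) ≤ dist x y) {x y : X} (hx : x ∈ s) (hy : y ∈ s)
    {n : ℕ} (hxn : IsPeriodicPt f n x) (hyn : IsPeriodicPt f n y) (hn : 0 < n) :
    dist x y ≤ dist (f x) (f y) := by
  obtain ⟨n, rfl⟩ := Nat.exists_eq_succ_of_ne_zero hn.ne'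
  calc dist x y = dist (f^[n] (f x)) (f^[n] (f y)) := by
        rw [← iterate_succ_apply, ← iterate_succ_apply, hxn.eq, hyn.eq]
    _ ≤ dist (f x) (f y) := dist_iterate_le_of_mapsTo hs hf (hs hx) (hs hy) n

end Nonexpanding

theorem IsUltrametricDist.norm_sum_eq_of_forall_norm_lt {M ι : Type*} [SeminormedAddCommGroup M]
    [IsUltrametricDist M] [DecidableEq ι] {s : Finset ι} {f : ι → M} {i₀ : ι} (h₀ : i₀ ∈ s)
    (hlt : ∀ i ∈ s, i ≠ i₀ → ‖f i‖ < ‖f i₀‖) : ‖∑ i ∈ s, f i‖ = ‖f i₀‖ := by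
  rw [← add_sum_erase s f h₀]
  rcases (s.erase i₀).eq_empty_or_nonempty with he | hne
  · simp [he]
  · have hrest : ‖∑ i ∈ s.erase i₀, f i‖ < ‖f i₀‖ :=
      (hne.norm_sum_le_sup'_norm f).trans_lt <| (sup'_lt_iff _).2 fun i hi =>
        hlt i (mem_of_mem_erase hi) (ne_of_mem_erase hi)
    rw [norm_add_eq_max_of_norm_ne_norm hrest.ne', max_eq_left hrest.le]

theorem IsUltrametricDist.norm_pow_sub_pow_le {K : Type*} [NormedField K] [IsUltrametricDist K]
    {x y : K} {L : ℝ} (hx : ‖x‖ ≤ L) (hy : ‖y‖ ≤ L) (n : ℕ) :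
    ‖x ^ n - y ^ n‖ ≤ L ^ (n - 1) * ‖x - y‖ := by
  have hL : 0 ≤ L := (norm_nonneg x).trans hx
  rw [← geom_sum₂_mul, norm_mul]
  gcongr
  refine norm_sum_le_of_forall_le_of_nonneg (by positivity) fun j hj => ?_
  calc ‖x ^ j * y ^ (n - 1 - j)‖ ≤ L ^ j * L ^ (n - 1 - j) := by
        rw [norm_mul, norm_pow, norm_pow]
        gcongr
    _ = L ^ (n - 1) := by
        rw [← pow_add]
        have := mem_range.1 hj
        congr 1
        omega

section BelyiShape

variable {K : Type*}

def belyiSum [Semiring K] (C : ℕ → K) (k d : ℕ) (z : K) : K :=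
  ∑ i ∈ range (k + 1), C i * z ^ (d - i)

def belyiSumMap [Semiring K] (C : ℕ → K) (k d : ℕ) (a c z : K) : K := a * belyiSum C k d z + c

theorem belyiSumMap_zero [Semiring K] (C : ℕ → K) {k d : ℕ} (hkd : k < d) (a c : K) :
    belyiSumMap C k d a c 0 = c := by
  rw [belyiSumMap, belyiSum, sum_eq_zero fun i hi => ?_, mul_zero, zero_add]
  rw [zero_pow (by have := mem_range.1 hi; omega), mul_zero]

theorem ratCast_belyiMap [DivisionRing K] [CharZero K] (d k : ℕ) (a c z : ℚ) :
    ((belyiMap d k a c z : ℚ) : K) = belyiSumMap (fun i => (belyiCoeff d k i : K)) k d a c z := by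
  simp [belyiMap, belyi, belyiSumMap, belyiSum]

theorem isPeriodicPt_ratCast_belyiMap [DivisionRing K] [CharZero K] {d k N : ℕ} {a c z : ℚ}
    (h : IsPeriodicPt (belyiMap d k a c) N z) :
    IsPeriodicPt (belyiSumMap (fun i => (belyiCoeff d k i : K)) k d a c) N (z : K) := by
  rw [IsPeriodicPt, IsFixedPt,
    ← (Semiconj.iterate_right (f := ((↑) : ℚ → K)) (ratCast_belyiMap d k a c) N) z, h.eq]

theorem norm_belyiSumMap_sub_le [NormedField K] [IsUltrametricDist K] (C : ℕ → K) (k d : ℕ)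
    (a c : K) {x y : K} {L κ : ℝ} (hx : ‖x‖ ≤ L) (hy : ‖y‖ ≤ L)
    (hκ : ∀ i ∈ range (k + 1), ‖a‖ * ‖C i‖ * L ^ (d - i - 1) ≤ κ) :
    ‖belyiSumMap C k d a c x - belyiSumMap C k d a c y‖ ≤ κ * ‖x - y‖ := by
  have hκ0 : 0 ≤ κ := (hκ 0 (by simp)).trans' (by have := (norm_nonneg x).trans hx; positivity)
  have hsub : belyiSumMap C k d a c x - belyiSumMap C k d a c y =
      ∑ i ∈ range (k + 1), a * C i * (x ^ (d - i) - y ^ (d - i)) := by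
    simp only [belyiSumMap, belyiSum, add_sub_add_right_eq_sub, ← mul_sub, ← sum_sub_distrib,
      mul_sum, mul_assoc]
  rw [hsub]
  refine IsUltrametricDist.norm_sum_le_of_forall_le_of_nonneg (by positivity) fun i hi => ?_
  calc ‖a * C i * (x ^ (d - i) - y ^ (d - i))‖
      ≤ ‖a‖ * ‖C i‖ * (L ^ (d - i - 1) * ‖x - y‖) := by
        rw [norm_mul, norm_mul]
        gcongr
        exact IsUltrametricDist.norm_pow_sub_pow_le hx hy _
    _ ≤ κ * ‖x - y‖ := by
        rw [← mul_assoc]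
        gcongr
        exact hκ i hi

end BelyiShape

/-- `‖B_{d,k}(z)‖_p = belyiGrowth d r |d - r|_p ‖z‖_p` whenever `‖z‖_p > 1`. -/
def belyiGrowth (d r : ℕ) (P t : ℝ) : ℝ := max (t ^ (d - r)) (P * t ^ d)

theorem belyiGrowth_le_belyiGrowth {d r : ℕ} {P s t : ℝ} (hP : 0 ≤ P) (hs : 0 ≤ s) (hst : s ≤ t) :
    belyiGrowth d r P s ≤ belyiGrowth d r P t := by
  unfold belyiGrowth
  gcongr

/-- The norm pattern of the coefficients `b_i` of `B_{d,k}` at an IDF prime `p` with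
`p ∣ d - r`: `b_r` is a unit, every other `b_i` has norm `P = |d - r|_p`, and `P⁻¹` is not the
`r`-th power of a norm `> 1`. -/
structure IsIDFProfile {K : Type*} [NormedField K] (C : ℕ → K) (d k r : ℕ) (P : ℝ) : Prop where
  r_le : r ≤ k
  add_two_le : k + 2 ≤ d
  pos : 0 < P
  lt_one : P < 1
  norm_coeff : ∀ i ∈ range (k + 1), ‖C i‖ = if i = r then 1 else P
  pow_mul_ne_one : ∀ z : K, 1 < ‖z‖ → ‖z‖ ^ r * P ≠ 1

namespace IsIDFProfile

variable {K : Type*} [NormedField K] {C : ℕ → K} {d k r : ℕ} {P : ℝ}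

theorem r_mem_range (h : IsIDFProfile C d k r P) : r ∈ range (k + 1) :=
  Finset.mem_range.2 (Nat.lt_succ_of_le h.r_le)

theorem norm_coeff_le_one (h : IsIDFProfile C d k r P) {i : ℕ} (hi : i ∈ range (k + 1)) :
    ‖C i‖ ≤ 1 := by
  rw [h.norm_coeff i hi]
  split_ifs
  exacts [le_rfl, h.lt_one.le]

theorem norm_coeff_mul_pow_le (h : IsIDFProfile C d k r P) {t : ℝ} (ht : 1 ≤ t) {i : ℕ}
    (hi : i ∈ range (k + 1)) : ‖C i‖ * t ^ (d - i) ≤ belyiGrowth d r P t := by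
  rw [h.norm_coeff i hi]
  split_ifs with hir
  · rw [hir, one_mul]
    exact le_max_left _ _
  · exact (mul_le_mul_of_nonneg_left (pow_le_pow_right₀ ht (Nat.sub_le d i)) h.pos.le).trans
      (le_max_right _ _)

theorem norm_mul_norm_coeff_mul_pow_le_one (h : IsIDFProfile C d k r P) {a : K} {τ : ℝ}
    (hτ : 1 ≤ τ) (hle : ‖a‖ * belyiGrowth d r P τ ≤ τ) {i : ℕ} (hi : i ∈ range (k + 1)) :
    ‖a‖ * ‖C i‖ * τ ^ (d - i - 1) ≤ 1 := by
  have hid : 1 ≤ d - i := by have := Finset.mem_range.1 hi; have := h.add_two_le; omega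
  refine le_of_mul_le_mul_right ?_ (one_pos.trans_le hτ)
  calc ‖a‖ * ‖C i‖ * τ ^ (d - i - 1) * τ = ‖a‖ * (‖C i‖ * τ ^ (d - i)) := by
        rw [mul_assoc _ _ τ, ← pow_succ, Nat.sub_add_cancel hid, mul_assoc]
    _ ≤ ‖a‖ * belyiGrowth d r P τ := by gcongr; exact h.norm_coeff_mul_pow_le hτ hi
    _ ≤ 1 * τ := by rwa [one_mul]

theorem norm_lt_one_of_growth_le (h : IsIDFProfile C d k r P) {a : K} {τ : ℝ} (hτ : 1 < τ)
    (hle : ‖a‖ * belyiGrowth d r P τ ≤ τ) : ‖a‖ < 1 := by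
  have hkd := h.add_two_le
  have hrk := h.r_le
  have hτpow : τ < τ ^ (d - r) := by simpa using pow_lt_pow_right₀ hτ (show 1 < d - r by omega)
  by_contra! ha
  have hpow : τ ^ (d - r) ≤ ‖a‖ * belyiGrowth d r P τ := by
    rw [← one_mul (τ ^ (d - r))]
    exact mul_le_mul ha (le_max_left _ _) (by positivity) (norm_nonneg a)
  exact (hτpow.trans_le (hpow.trans hle)).false

variable [IsUltrametricDist K]

theorem norm_belyiSum (h : IsIDFProfile C d k r P) {z : K} (hz : 1 < ‖z‖) :
    ‖belyiSum C k d z‖ = belyiGrowth d r P ‖z‖ := by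
  set t := ‖z‖
  have hkd := h.add_two_le
  have hrk := h.r_le
  have hsplit : P * t ^ d = t ^ r * P * t ^ (d - r) := by
    rw [mul_comm (t ^ r), mul_assoc, ← pow_add, Nat.add_sub_cancel' (by omega)]
  have hterm : ∀ i ∈ range (k + 1),
      ‖C i * z ^ (d - i)‖ = if i = r then t ^ (d - r) else P * t ^ (d - i) := by
    intro i hi
    rw [norm_mul, norm_pow, h.norm_coeff i hi]
    split_ifs with hir
    exacts [by rw [hir, one_mul], rfl]
  have h0 : 0 ∈ range (k + 1) := by simp
  rcases (h.pow_mul_ne_one z hz).lt_or_gt with hsmall | hlarge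
  · have hlt : P * t ^ d < t ^ (d - r) := by
      rw [hsplit]
      exact mul_lt_of_lt_one_left (by positivity) hsmall
    rw [belyiSum, IsUltrametricDist.norm_sum_eq_of_forall_norm_lt h.r_mem_range,
      hterm r h.r_mem_range, if_pos rfl, belyiGrowth, max_eq_left hlt.le]
    intro i hi hir
    rw [hterm i hi, hterm r h.r_mem_range, if_neg hir, if_pos rfl]
    exact (mul_le_mul_of_nonneg_left (pow_le_pow_right₀ hz.le (Nat.sub_le d i)) h.pos.le).trans_lt
      hlt
  · have hr0 : 0 ≠ r := by
      rintro rfl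
      rw [pow_zero, one_mul] at hlarge
      exact hlarge.not_gt h.lt_one
    have hgt : t ^ (d - r) < P * t ^ d := by
      rw [hsplit]
      exact lt_mul_of_one_lt_left (by positivity) hlarge
    rw [belyiSum, IsUltrametricDist.norm_sum_eq_of_forall_norm_lt h0, hterm 0 h0, if_neg hr0,
      Nat.sub_zero, belyiGrowth, max_eq_right hgt.le]
    intro i hi hi0
    rw [hterm i hi, hterm 0 h0, if_neg hr0, Nat.sub_zero]
    split_ifs with hir
    · exact hgt
    · have := Finset.mem_range.1 hi
      exact mul_lt_mul_of_pos_left (pow_lt_pow_right₀ hz (by omega)) h.pos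

theorem norm_belyiSum_one (h : IsIDFProfile C d k r P) : ‖belyiSum C k d 1‖ = 1 := by
  rw [belyiSum, IsUltrametricDist.norm_sum_eq_of_forall_norm_lt h.r_mem_range]
  · simp [h.norm_coeff r h.r_mem_range]
  · intro i hi hir
    simp [h.norm_coeff i hi, h.norm_coeff r h.r_mem_range, hir, h.lt_one]

theorem mapsTo_norm_ge (h : IsIDFProfile C d k r P) {a c : K} {R : ℝ} (hR : 1 < R)
    (hc : ‖c‖ < ‖a‖ * belyiGrowth d r P R) (hRa : R ≤ ‖a‖ * belyiGrowth d r P R) :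
    Set.MapsTo (belyiSumMap C k d a c) {z | R ≤ ‖z‖} {z | R ≤ ‖z‖} := by
  intro z (hz : R ≤ ‖z‖)
  have hgrow : ‖a‖ * belyiGrowth d r P R ≤ ‖a * belyiSum C k d z‖ := by
    rw [norm_mul, h.norm_belyiSum (hR.trans_le hz)]
    gcongr
    exact belyiGrowth_le_belyiGrowth h.pos.le (by linarith) hz
  have hne : ‖a * belyiSum C k d z‖ ≠ ‖c‖ := (hc.trans_le hgrow).ne'
  show R ≤ ‖a * belyiSum C k d z + c‖
  rw [IsUltrametricDist.norm_add_eq_max_of_norm_ne_norm hne, max_eq_left (hc.trans_le hgrow).le]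
  exact hRa.trans hgrow

/-- In the non-escaping regime `f` does not expand distances on the ball of radius `‖c‖`, but
it contracts them on the unit ball, so `0` and `1` cannot both be periodic. -/
theorem growth_lt_of_isPeriodicPt (h : IsIDFProfile C d k r P) {a c : K} {N : ℕ} (hN : 0 < N)
    (h0 : IsPeriodicPt (belyiSumMap C k d a c) N 0) (h1 : IsPeriodicPt (belyiSumMap C k d a c) N 1)
    (hc : 1 < ‖c‖) : ‖c‖ < ‖a‖ * belyiGrowth d r P ‖c‖ := by
  by_contra! hle
  set f := belyiSumMap C k d a c
  set τ := ‖c‖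
  have hkd := h.add_two_le
  have hτ0 : 0 < τ := one_pos.trans hc
  have hcoeff : ∀ i ∈ range (k + 1), ‖a‖ * ‖C i‖ * τ ^ (d - i - 1) ≤ 1 :=
    fun _ hi => h.norm_mul_norm_coeff_mul_pow_le_one hc.le hle hi
  have hlip : ∀ x ∈ Metric.closedBall (0 : K) τ, ∀ y ∈ Metric.closedBall (0 : K) τ,
      dist (f x) (f y) ≤ dist x y := by
    intro x hx y hy
    rw [mem_closedBall_zero_iff] at hx hy
    simpa [dist_eq_norm] using norm_belyiSumMap_sub_le C k d a c hx hy hcoeff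
  have hmaps : Set.MapsTo f (Metric.closedBall 0 τ) (Metric.closedBall 0 τ) := by
    intro x hx
    have hf0 : f 0 = c := belyiSumMap_zero C (by omega) a c
    have hfx : f x = (f x - f 0) + c := by rw [hf0, sub_add_cancel]
    rw [mem_closedBall_zero_iff, hfx]
    refine (IsUltrametricDist.norm_add_le_max _ _).trans (max_le ?_ le_rfl)
    simpa [dist_eq_norm] using (hlip x hx 0 (by simp [hτ0.le])).trans (Metric.mem_closedBall.1 hx)
  have hcontract : ‖f 0 - f 1‖ ≤ ‖a‖ * ‖(0 : K) - 1‖ :=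
    norm_belyiSumMap_sub_le C k d a c (by simp) norm_one.le fun i hi => by
      simpa using mul_le_mul_of_nonneg_left (h.norm_coeff_le_one hi) (norm_nonneg a)
  have hdist := h0.dist_le_dist_apply hmaps hlip (by simp [hτ0.le]) (by simp [hc.le]) h1 hN
  rw [dist_eq_norm, dist_eq_norm] at hdist
  have ha := h.norm_lt_one_of_growth_le hc hle
  simp only [zero_sub, norm_neg, norm_one] at hdist hcontract
  linarith

theorem norm_const_le_one_of_isPeriodicPt (h : IsIDFProfile C d k r P) {a c : K} {N : ℕ}
    (hN : 0 < N) (h0 : IsPeriodicPt (belyiSumMap C k d a c) N 0)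
    (h1 : IsPeriodicPt (belyiSumMap C k d a c) N 1) : ‖c‖ ≤ 1 := by
  by_contra! hc
  have hgrow := h.growth_lt_of_isPeriodicPt hN h0 h1 hc
  have hmaps := h.mapsTo_norm_ge hc hgrow hgrow.le
  have hf0 : belyiSumMap C k d a c 0 ∈ {z | ‖c‖ ≤ ‖z‖} := by
    simp [belyiSumMap_zero C (show k < d by have := h.add_two_le; omega)]
  have := h0.mem_of_mapsTo hN hmaps hf0
  simp only [Set.mem_ofPred_eq, norm_zero] at this
  linarith

theorem norm_scale_le_one_of_isPeriodicPt (h : IsIDFProfile C d k r P) {a c : K} {N : ℕ}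
    (hN : 0 < N) (h1 : IsPeriodicPt (belyiSumMap C k d a c) N 1) (hc : ‖c‖ ≤ 1) : ‖a‖ ≤ 1 := by
  by_contra! ha
  have hgrow : 1 ≤ belyiGrowth d r P ‖a‖ := (one_le_pow₀ ha.le).trans (le_max_left _ _)
  have hRa : ‖a‖ ≤ ‖a‖ * belyiGrowth d r P ‖a‖ := le_mul_of_one_le_right (norm_nonneg a) hgrow
  have hmaps := h.mapsTo_norm_ge ha (hc.trans_lt (ha.trans_le hRa)) hRa
  have hf1 : belyiSumMap C k d a c 1 ∈ {z | ‖a‖ ≤ ‖z‖} := by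
    have hne : ‖a * belyiSum C k d 1‖ ≠ ‖c‖ := by
      rw [norm_mul, h.norm_belyiSum_one, mul_one]
      exact (hc.trans_lt ha).ne'
    simp only [Set.mem_ofPred_eq, belyiSumMap]
    rw [IsUltrametricDist.norm_add_eq_max_of_norm_ne_norm hne, norm_mul, h.norm_belyiSum_one,
      mul_one]
    exact le_max_left _ _
  have := h1.mem_of_mapsTo hN hmaps hf1
  simp only [Set.mem_ofPred_eq, norm_one] at this
  linarith

end IsIDFProfile

namespace Padic

variable {p : ℕ} [Fact p.Prime]

theorem norm_natCast_eq_inv_pow {n : ℕ} (hn : n ≠ 0) :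
    ‖(n : ℚ_[p])‖ = ((p : ℝ) ^ padicValNat p n)⁻¹ := by
  rw [norm_eq_zpow_neg_valuation (Nat.cast_ne_zero.2 hn), valuation_natCast, zpow_neg,
    zpow_natCast]

theorem norm_factorial_eq_one {n : ℕ} (hn : n < p) : ‖(n.factorial : ℚ_[p])‖ = 1 := by
  rw [norm_natCast_eq_one_iff, (Fact.out : p.Prime).coprime_iff_not_dvd,
    (Fact.out : p.Prime).dvd_factorial]
  omega

theorem norm_natCast_sub_natCast_eq_one {d r j : ℕ} (hdr : (p : ℤ) ∣ (d : ℤ) - r) (hjr : j ≠ r)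
    (hlt : |(j : ℤ) - r| < p) : ‖(d : ℚ_[p]) - j‖ = 1 := by
  have hndvd : ¬ (p : ℤ) ∣ (d : ℤ) - j := fun hdj => hjr <| by
    have := Int.eq_zero_of_abs_lt_dvd (dvd_sub hdr hdj) (by rwa [sub_sub_sub_cancel_left])
    omega
  have hcast : ((((d : ℤ) - j : ℤ)) : ℚ_[p]) = (d : ℚ_[p]) - j := by push_cast; rfl
  rw [← hcast]
  exact le_antisymm (norm_int_le_one _) (not_lt.1 (mt norm_intCast_lt_one_iff.1 hndvd))

theorem norm_belyiCoeff {d k r i : ℕ} (hkp : k < p) (hrk : r ≤ k) (hrd : r < d)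
    (hdvd : p ∣ d - r) (hik : i ≤ k) :
    ‖(belyiCoeff d k i : ℚ_[p])‖ = if i = r then 1 else ((p : ℝ) ^ padicValNat p (d - r))⁻¹ := by
  have hunit : ∀ j ∈ (range (k + 1)).erase i, j ≠ r → ‖(d : ℚ_[p]) - j‖ = 1 := by
    intro j hj hjr
    have hjk := Finset.mem_range.1 (mem_of_mem_erase hj)
    refine norm_natCast_sub_natCast_eq_one ?_ hjr (abs_sub_lt_iff.2 ⟨by omega, by omega⟩)
    rw [← Nat.cast_sub hrd.le]
    exact Int.natCast_dvd_natCast.2 hdvd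
  have hfact : ‖(((k - i).factorial * i.factorial : ℕ) : ℚ_[p])‖ = 1 := by
    rw [Nat.cast_mul, norm_mul, norm_factorial_eq_one (by omega), norm_factorial_eq_one (by omega),
      one_mul]
  have hcoeff : (belyiCoeff d k i : ℚ_[p]) =
      (-1) ^ (k - i) / (((k - i).factorial * i.factorial : ℕ) : ℚ_[p]) *
        ∏ j ∈ (range (k + 1)).erase i, ((d : ℚ_[p]) - j) := by
    simp [belyiCoeff]
  rw [hcoeff, norm_mul, norm_div, hfact, norm_pow, norm_neg, norm_one, one_pow, div_one, one_mul,
    norm_prod]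
  split_ifs with hir
  · exact prod_eq_one fun j hj => hunit j hj (hir ▸ ne_of_mem_erase hj)
  · have hr : r ∈ (range (k + 1)).erase i :=
      mem_erase.2 ⟨Ne.symm hir, Finset.mem_range.2 (by omega)⟩
    rw [prod_eq_single_of_mem r hr hunit, ← Nat.cast_sub hrd.le,
      norm_natCast_eq_inv_pow (by omega)]

theorem norm_pow_mul_ne_one {r e : ℕ} (hre : ¬ r ∣ e) {z : ℚ_[p]} (hz : z ≠ 0) :
    ‖z‖ ^ r * ((p : ℝ) ^ e)⁻¹ ≠ 1 := by
  have hp : (1 : ℝ) < p := by exact_mod_cast (Fact.out : p.Prime).one_lt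
  intro heq
  rw [norm_eq_zpow_neg_valuation hz, mul_inv_eq_one₀ (by positivity), ← zpow_natCast,
    ← zpow_mul, ← zpow_natCast (p : ℝ) e] at heq
  have := zpow_right_injective₀ (by positivity) hp.ne' heq
  exact hre (Int.natCast_dvd_natCast.1 ⟨-z.valuation, by rw [← this]; ring⟩)

theorem padicValRat_nonneg_of_norm_le_one {x : ℚ} (hx : ‖(x : ℚ_[p])‖ ≤ 1) :
    0 ≤ padicValRat p x := by
  rwa [norm_le_one_iff_val_nonneg, valuation_ratCast] at hx

end Padic

theorem IsIDFPrime.exists_isIDFProfile {d k p : ℕ} [Fact p.Prime] (hp : IsIDFPrime d k p)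
    (hkd : k + 2 ≤ d) : ∃ r P, IsIDFProfile (fun i => (belyiCoeff d k i : ℚ_[p])) d k r P := by
  obtain ⟨hprime, hkp, r, hrk, hdvd, hndvd⟩ := hp
  have he : 1 ≤ padicValNat p (d - r) := one_le_padicValNat_of_dvd (by omega) hdvd
  have hpe : (1 : ℝ) < (p : ℝ) ^ padicValNat p (d - r) :=
    one_lt_pow₀ (by exact_mod_cast hprime.one_lt) (by omega)
  refine ⟨r, ((p : ℝ) ^ padicValNat p (d - r))⁻¹, hrk, hkd, by positivity,
    inv_lt_one_of_one_lt₀ hpe, fun i hi => ?_, fun z hz => ?_⟩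
  · exact Padic.norm_belyiCoeff hkp hrk (by omega) hdvd
      (Nat.lt_succ_iff.1 (Finset.mem_range.1 hi))
  · exact Padic.norm_pow_mul_ne_one hndvd (norm_pos_iff.1 (one_pos.trans hz))

theorem pcf_params_pIntegral_general (d k p : ℕ) (hd : 3 ≤ d)
    (hk2 : k ≤ (d - 1) / 2) (hp : IsIDFPrime d k p)
    (α β : ℚ) (n m : ℕ) (hn : 1 ≤ n) (hm : 1 ≤ m)
    (h0 : (belyiMap d k α β)^[n] 0 = 0) (h1 : (belyiMap d k α β)^[m] 1 = 1) :
    α ≠ 0 ∧ 0 ≤ padicValRat p α ∧ (β = 0 ∨ 0 ≤ padicValRat p β) := by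
  have : Fact p.Prime := ⟨hp.1⟩
  have hα : α ≠ 0 := by
    rintro rfl
    have hconst : ∀ z, belyiMap d k 0 β z = β := by simp [belyiMap]
    exact zero_ne_one <| ((IsPeriodicPt.eq_of_forall_apply_eq h0 hn hconst).trans
      (IsPeriodicPt.eq_of_forall_apply_eq h1 hm hconst).symm)
  obtain ⟨r, P, hprofile⟩ := hp.exists_isIDFProfile (by omega)
  have hN : 0 < n * m := by positivity
  have hper0 : IsPeriodicPt (belyiMap d k α β) (n * m) 0 := IsPeriodicPt.mul_const h0 m
  have hper1 : IsPeriodicPt (belyiMap d k α β) (n * m) 1 := IsPeriodicPt.const_mul h1 n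
  have hper0p := isPeriodicPt_ratCast_belyiMap (K := ℚ_[p]) hper0
  have hper1p := isPeriodicPt_ratCast_belyiMap (K := ℚ_[p]) hper1
  rw [Rat.cast_zero] at hper0p
  rw [Rat.cast_one] at hper1p
  have hβ_norm := hprofile.norm_const_le_one_of_isPeriodicPt hN hper0p hper1p
  have hα_norm := hprofile.norm_scale_le_one_of_isPeriodicPt hN hper1p hβ_norm
  exact ⟨hα, Padic.padicValRat_nonneg_of_norm_le_one hα_norm,
    Or.inr (Padic.padicValRat_nonneg_of_norm_le_one hβ_norm)⟩

/-- (Proposition: `p`-integrality of PCF parameters.)  If both critical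
points `0` and `1` are periodic for `f_{α,β}`, then `α` and `β` are `p`-integral for any
IDF prime `p` for `(d,k)` (and moreover `α ≠ 0`). -/
theorem pcf_params_pIntegral (d k p : ℕ) (hd : 3 ≤ d) (hk1 : 1 ≤ k)
    (hk2 : k ≤ (d - 1) / 2) (hp : IsIDFPrime d k p)
    (α β : ℚ) (n m : ℕ) (hn : 1 ≤ n) (hm : 1 ≤ m)
    (h0 : (belyiMap d k α β)^[n] 0 = 0) (h1 : (belyiMap d k α β)^[m] 1 = 1) :
    α ≠ 0 ∧ 0 ≤ padicValRat p α ∧ (β = 0 ∨ 0 ≤ padicValRat p β) :=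
  pcf_params_pIntegral_general d k p hd hk2 hp α β n m hn hm h0 h1
end

section
/- Let d ≥ 3 and 1 ≤ k ≤ ⌈(d−2)/2⌉ be integers and let p be an IDF prime for (d,k). Suppose η, γ are rational numbers and there exist integers n_0 > m_0 ≥ 0 and n_1 > m_1 ≥ 0 with f^{n_0}_{η,γ}(0) = f^{m_0}_{η,γ}(0) and f^{n_1}_{η,γ}(1) = f^{m_1}_{η,γ}(1) (i.e., f_{η,γ} is PCF with both critical points 0 and 1 preperiodic). Then either both η and γ are p-integral, or γ ≠ 0 with v_p(γ) < 0 and η is p-integral with η = 0 or v_p(η) > 0. -/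
/-!
Work with the `p`-adic absolute value. Since `p > k`, the coefficient `b_i` of `B_{d,k}` is a
`p`-adic unit for `i = r` and has norm `|d - r|_p < 1` otherwise. Hence `|B(1)|_p = 1`, and for
`|z|_p > 1` the dominant term of `B(z)` is `b_0 z^d` or `b_r z^(d-r)`: their norms differ
exactly because `r ∤ v_p(d - r)`, so `|B(z)|_p ≥ |z|_p^(d-r) ≥ |z|_p^2`. Therefore, when
`|η|_p ≥ 1`, the norm strictly increases along an orbit as soon as it exceeds both `1` and
`|γ|_p`, and such an orbit is not preperiodic. If `|η|_p > 1 ≥ |γ|_p`, the orbit of `1` gets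
there in one step (`|f(1)|_p = |η|_p`); if `|γ|_p > 1` and `|η|_p ≥ 1`, so does the orbit of `0`
(`f(0) = γ`). These two cases are exactly the negation of the conclusion.
-/

open Finset Function

namespace IsUltrametricDist

variable {E ι : Type*} [SeminormedAddCommGroup E] [IsUltrametricDist E]

theorem norm_add_eq_left_of_norm_lt {x y : E} (h : ‖y‖ < ‖x‖) : ‖x + y‖ = ‖x‖ := by
  rw [norm_add_eq_max_of_norm_ne_norm h.ne', max_eq_left h.le]

theorem norm_sum_eq_of_forall_norm_lt_s6 {s : Finset ι} {f : ι → E} {i : ι} (hi : i ∈ s)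
    (h : ∀ j ∈ s, j ≠ i → ‖f j‖ < ‖f i‖) : ‖∑ j ∈ s, f j‖ = ‖f i‖ := by
  classical
  rw [← Finset.add_sum_erase s f hi]
  rcases (s.erase i).eq_empty_or_nonempty with hempty | hne
  · simp [hempty]
  refine norm_add_eq_left_of_norm_lt <| (hne.norm_sum_le_sup'_norm f).trans_lt ?_
  exact (Finset.sup'_lt_iff hne).2 fun j hj => h j (mem_of_mem_erase hj) (ne_of_mem_erase hj)

end IsUltrametricDist

theorem Set.MapsTo.iterate_ne_iterate_of_lt_map {α β : Type*} [Preorder β] {g : α → α}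
    {s : Set α} (hs : MapsTo g s s) {v : α → β} (hv : ∀ y ∈ s, v y < v (g y)) {x : α}
    {j m n : ℕ} (hx : g^[j] x ∈ s) (hmn : m < n) : g^[n] x ≠ g^[m] x := by
  intro h
  have hmono : StrictMono fun i => v (g^[i] (g^[j] x)) :=
    strictMono_nat_of_lt_succ fun i => by
      rw [iterate_succ_apply']
      exact hv _ (hs.iterate i hx)
  have hcomm : ∀ i, g^[i] (g^[j] x) = g^[j] (g^[i] x) := fun i => by
    rw [← iterate_add_apply, add_comm, iterate_add_apply]
  exact (hmono hmn).ne' (by simp only [hcomm, h])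

namespace Padic

variable {p : ℕ} [Fact p.Prime]

theorem norm_ratCast_eq_zpow {x : ℚ} (hx : x ≠ 0) :
    ‖(x : ℚ_[p])‖ = (p : ℝ) ^ (-padicValRat p x) := by
  rw [norm_eq_zpow_neg_valuation (by exact_mod_cast hx), valuation_ratCast]

theorem norm_ratCast_le_one_iff {x : ℚ} : ‖(x : ℚ_[p])‖ ≤ 1 ↔ PIntegral p x := by
  have hp : (1 : ℝ) < p := mod_cast (Fact.out : p.Prime).one_lt
  rcases eq_or_ne x 0 with rfl | hx
  · simp [PIntegral]
  · rw [norm_ratCast_eq_zpow hx, zpow_le_one_iff_right₀ hp, neg_nonpos]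
    simp [PIntegral, hx]

theorem one_lt_norm_ratCast_iff {x : ℚ} :
    1 < ‖(x : ℚ_[p])‖ ↔ x ≠ 0 ∧ padicValRat p x < 0 := by
  rw [← not_le, norm_ratCast_le_one_iff, PIntegral, not_or, not_le]

theorem norm_ratCast_lt_one_iff {x : ℚ} :
    ‖(x : ℚ_[p])‖ < 1 ↔ x = 0 ∨ 0 < padicValRat p x := by
  have hp : (1 : ℝ) < p := mod_cast (Fact.out : p.Prime).one_lt
  rcases eq_or_ne x 0 with rfl | hx
  · simp
  · rw [norm_ratCast_eq_zpow hx, zpow_lt_one_iff_right₀ hp, neg_neg_iff_pos]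
    simp [hx]

theorem norm_natCast_mul_norm_pow_ne_one {n r : ℕ} (hn : n ≠ 0)
    (hr : ¬ r ∣ padicValNat p n) {z : ℚ_[p]} (hz : z ≠ 0) : ‖(n : ℚ_[p])‖ * ‖z‖ ^ r ≠ 1 := by
  have hp : (1 : ℝ) < p := mod_cast (Fact.out : p.Prime).one_lt
  rw [norm_eq_zpow_neg_valuation (by exact_mod_cast hn), valuation_natCast,
    norm_eq_zpow_neg_valuation hz, ← zpow_natCast, ← zpow_mul, ← zpow_add₀ (by positivity),
    Ne, zpow_eq_one_iff_right₀ (by positivity) hp.ne']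
  intro h
  exact hr (Int.natCast_dvd_natCast.1 ⟨-z.valuation, by linarith⟩)

end Padic

section Belyi

open Padic

variable {d k p r : ℕ} [Fact p.Prime]

theorem belyi_zero (hkd : k < d) : belyi d k 0 = 0 :=
  Finset.sum_eq_zero fun i hi => by
    rw [zero_pow (by simp at hi; omega), mul_zero]

theorem belyiMap_zero (hkd : k < d) (a c : ℚ) : belyiMap d k a c 0 = c := by
  rw [belyiMap, belyi_zero hkd, mul_zero, zero_add]

theorem ratCast_belyi (z : ℚ) :
    ((belyi d k z : ℚ) : ℚ_[p]) =
      ∑ i ∈ range (k + 1), (belyiCoeff d k i : ℚ_[p]) * (z : ℚ_[p]) ^ (d - i) := by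
  simp [belyi]

theorem norm_natCast_sub_eq_one (hkp : k < p) (hrk : r ≤ k) (hkd : k < d) (hdvd : p ∣ d - r)
    {j : ℕ} (hjk : j ≤ k) (hjr : j ≠ r) : ‖((d - j : ℕ) : ℚ_[p])‖ = 1 := by
  rw [norm_natCast_eq_one_iff, Nat.Prime.coprime_iff_not_dvd Fact.out]
  intro hpj
  have hpjr : (p : ℤ) ∣ (r : ℤ) - j := by
    have := dvd_sub (Int.natCast_dvd_natCast.2 hpj) (Int.natCast_dvd_natCast.2 hdvd)
    rwa [Nat.cast_sub (by omega), Nat.cast_sub (by omega), sub_sub_sub_cancel_left] at this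
  have := Int.eq_zero_of_abs_lt_dvd hpjr (by rw [abs_lt]; omega)
  omega

theorem norm_belyiCoeff (hkp : k < p) (hrk : r ≤ k) (hkd : k < d) (hdvd : p ∣ d - r)
    {i : ℕ} (hik : i ≤ k) :
    ‖(belyiCoeff d k i : ℚ_[p])‖ = if i = r then 1 else ‖((d - r : ℕ) : ℚ_[p])‖ := by
  have hfact : ∀ n ≤ k, ‖(n.factorial : ℚ_[p])‖ = 1 := fun n hn => by
    rw [norm_natCast_eq_one_iff, Nat.Prime.coprime_iff_not_dvd Fact.out,
      Nat.Prime.dvd_factorial Fact.out]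
    omega
  have hfactor : ∀ j ∈ (range (k + 1)).erase i,
      ‖(d : ℚ_[p]) - j‖ = if r = j then ‖((d - r : ℕ) : ℚ_[p])‖ else 1 := fun j hj => by
    have hjk : j ≤ k := by simp at hj; omega
    rw [← Nat.cast_sub (by omega)]
    split_ifs with hrj
    · rw [hrj]
    · exact norm_natCast_sub_eq_one hkp hrk hkd hdvd hjk (Ne.symm hrj)
  simp only [belyiCoeff, Rat.cast_mul, Rat.cast_div, Rat.cast_pow, Rat.cast_neg, Rat.cast_one,
    Rat.cast_natCast, Rat.cast_prod, Rat.cast_sub, norm_mul, norm_div, norm_pow, norm_neg,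
    norm_one, one_pow, hfact _ hik, hfact _ (Nat.sub_le k i), norm_prod]
  rw [prod_congr rfl hfactor, prod_ite_eq]
  by_cases hir : i = r
  · simp [hir]
  · simp [hir, Ne.symm hir, hrk]

theorem norm_belyi_one (hkp : k < p) (hrk : r ≤ k) (hkd : k < d) (hdvd : p ∣ d - r) :
    ‖(belyi d k 1 : ℚ_[p])‖ = 1 := by
  have hδ : ‖((d - r : ℕ) : ℚ_[p])‖ < 1 := norm_natCast_lt_one_iff.2 hdvd
  rw [ratCast_belyi, IsUltrametricDist.norm_sum_eq_of_forall_norm_lt_s6 (i := r) (by simp; omega)]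
  · simp [norm_belyiCoeff hkp hrk hkd hdvd hrk]
  · intro j hj hjr
    simp only [Rat.cast_one, one_pow, mul_one]
    rwa [norm_belyiCoeff hkp hrk hkd hdvd hrk,
      norm_belyiCoeff hkp hrk hkd hdvd (by simp at hj; omega), if_neg hjr, if_pos rfl]

theorem norm_pow_le_norm_belyi (hkp : k < p) (hrk : r ≤ k) (hkd : k < d) (hdvd : p ∣ d - r)
    (hnd : ¬ r ∣ padicValNat p (d - r)) {z : ℚ} (hz : 1 < ‖(z : ℚ_[p])‖) :
    ‖(z : ℚ_[p])‖ ^ (d - r) ≤ ‖(belyi d k z : ℚ_[p])‖ := by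
  set x := ‖(z : ℚ_[p])‖
  set δ := ‖((d - r : ℕ) : ℚ_[p])‖
  set T : ℕ → ℚ_[p] := fun i => (belyiCoeff d k i : ℚ_[p]) * (z : ℚ_[p]) ^ (d - i)
  have hδ : 0 < δ := norm_pos_iff.2 (by exact_mod_cast (Nat.sub_pos_of_lt (by omega)).ne')
  have hT : ∀ i ≤ k, ‖T i‖ = (if i = r then 1 else δ) * x ^ (d - i) := fun i hi => by
    simp only [T, norm_mul, norm_pow, norm_belyiCoeff hkp hrk hkd hdvd hi, x]
    rfl
  have hTr : ‖T r‖ = x ^ (d - r) := by rw [hT r hrk, if_pos rfl, one_mul]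
  have hT0 : δ * x ^ d ≤ ‖T 0‖ := by
    have hδ1 : δ ≤ 1 := (norm_natCast_lt_one_iff.2 hdvd).le
    rw [hT 0 (Nat.zero_le k), Nat.sub_zero]
    split_ifs
    · exact mul_le_mul_of_nonneg_right hδ1 (by positivity)
    · rfl
  have hlt_T0 : ∀ j ≤ k, j ≠ 0 → j ≠ r → ‖T j‖ < ‖T 0‖ := fun j hjk hj0 hjr => by
    rw [hT j hjk, if_neg hjr]
    exact (mul_lt_mul_of_pos_left (pow_lt_pow_right₀ hz (by omega)) hδ).trans_le hT0
  have hTr_ne_T0 : r ≠ 0 → ‖T r‖ ≠ ‖T 0‖ := fun hr h => by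
    have hz0 : (z : ℚ_[p]) ≠ 0 := norm_pos_iff.1 (one_pos.trans hz)
    refine norm_natCast_mul_norm_pow_ne_one (Nat.sub_pos_of_lt (by omega)).ne' hnd hz0 ?_
    have hxr : x ^ d = x ^ (d - r) * x ^ r := by rw [← pow_add, Nat.sub_add_cancel (by omega)]
    rw [hTr, hT 0 (Nat.zero_le k), if_neg hr.symm, Nat.sub_zero, hxr] at h
    refine mul_left_cancel₀ (pow_pos (one_pos.trans hz) (d - r)).ne' ?_
    linear_combination -h
  rw [ratCast_belyi, ← hTr]
  rcases lt_or_ge ‖T 0‖ ‖T r‖ with h0r | hr0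
  · rw [IsUltrametricDist.norm_sum_eq_of_forall_norm_lt_s6 (i := r) (by simp; omega)]
    intro j hj hjr
    rcases eq_or_ne j 0 with rfl | hj0
    · exact h0r
    · exact (hlt_T0 j (by simp at hj; omega) hj0 hjr).trans h0r
  · rw [IsUltrametricDist.norm_sum_eq_of_forall_norm_lt_s6 (i := 0) (by simp)]
    · exact hr0
    intro j hj hj0
    rcases eq_or_ne j r with rfl | hjr
    · exact lt_of_le_of_ne hr0 (hTr_ne_T0 hj0)
    · exact hlt_T0 j (by simp at hj; omega) hj0 hjr

theorem norm_lt_norm_belyiMap (hkp : k < p) (hrk : r ≤ k) (hkd : k < d) (hrd : r + 2 ≤ d)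
    (hdvd : p ∣ d - r) (hnd : ¬ r ∣ padicValNat p (d - r)) {η γ w : ℚ}
    (hη : 1 ≤ ‖(η : ℚ_[p])‖) (hw : 1 < ‖(w : ℚ_[p])‖) (hγw : ‖(γ : ℚ_[p])‖ ≤ ‖(w : ℚ_[p])‖) :
    ‖(w : ℚ_[p])‖ < ‖(belyiMap d k η γ w : ℚ_[p])‖ := by
  have hB : ‖(w : ℚ_[p])‖ < ‖(η : ℚ_[p]) * (belyi d k w : ℚ_[p])‖ :=
    calc ‖(w : ℚ_[p])‖ = ‖(w : ℚ_[p])‖ ^ 1 := (pow_one _).symm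
      _ < ‖(w : ℚ_[p])‖ ^ (d - r) := pow_lt_pow_right₀ hw (by omega)
      _ ≤ ‖(belyi d k w : ℚ_[p])‖ := norm_pow_le_norm_belyi hkp hrk hkd hdvd hnd hw
      _ ≤ ‖(η : ℚ_[p]) * (belyi d k w : ℚ_[p])‖ := by
        rw [norm_mul]; exact le_mul_of_one_le_left (norm_nonneg _) hη
  rwa [belyiMap, Rat.cast_add, Rat.cast_mul,
    IsUltrametricDist.norm_add_eq_left_of_norm_lt (hγw.trans_lt hB)]

theorem belyiMap_iterate_ne_iterate (hkp : k < p) (hrk : r ≤ k) (hkd : k < d) (hrd : r + 2 ≤ d)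
    (hdvd : p ∣ d - r) (hnd : ¬ r ∣ padicValNat p (d - r)) {η γ x : ℚ}
    (hη : 1 ≤ ‖(η : ℚ_[p])‖) {j m n : ℕ}
    (hx : 1 < ‖((belyiMap d k η γ)^[j] x : ℚ_[p])‖ ∧
      ‖(γ : ℚ_[p])‖ ≤ ‖((belyiMap d k η γ)^[j] x : ℚ_[p])‖)
    (hmn : m < n) : (belyiMap d k η γ)^[n] x ≠ (belyiMap d k η γ)^[m] x := by
  have hlt : ∀ w ∈ {w : ℚ | 1 < ‖(w : ℚ_[p])‖ ∧ ‖(γ : ℚ_[p])‖ ≤ ‖(w : ℚ_[p])‖},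
      ‖(w : ℚ_[p])‖ < ‖(belyiMap d k η γ w : ℚ_[p])‖ := fun w ⟨hw, hγw⟩ =>
    norm_lt_norm_belyiMap hkp hrk hkd hrd hdvd hnd hη hw hγw
  refine Set.MapsTo.iterate_ne_iterate_of_lt_map (fun w hw => ?_) hlt hx hmn
  exact ⟨hw.1.trans (hlt w hw), hw.2.trans (hlt w hw).le⟩

end Belyi

theorem pcf_preperiodic_params_general (d k p : ℕ) (hd : 3 ≤ d)
    (hk2 : k ≤ (d - 1) / 2) (hp : IsIDFPrime d k p)
    (η γ : ℚ) (n₀ m₀ n₁ m₁ : ℕ) (h0lt : m₀ < n₀) (h1lt : m₁ < n₁)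
    (h0 : (belyiMap d k η γ)^[n₀] 0 = (belyiMap d k η γ)^[m₀] 0)
    (h1 : (belyiMap d k η γ)^[n₁] 1 = (belyiMap d k η γ)^[m₁] 1) :
    (PIntegral p η ∧ PIntegral p γ) ∨
      (γ ≠ 0 ∧ padicValRat p γ < 0 ∧ (η = 0 ∨ 0 < padicValRat p η)) := by
  obtain ⟨hpp, hkp, r, hrk, hdvd, hnd⟩ := hp
  have : Fact p.Prime := ⟨hpp⟩
  have hkd : k < d := by omega
  have hrd : r + 2 ≤ d := by omega
  have h_one_escapes : ¬ (1 < ‖(η : ℚ_[p])‖ ∧ ‖(γ : ℚ_[p])‖ ≤ 1) := fun ⟨hη, hγ⟩ => by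
    have hηB : ‖(η : ℚ_[p]) * (belyi d k 1 : ℚ_[p])‖ = ‖(η : ℚ_[p])‖ := by
      rw [norm_mul, norm_belyi_one hkp hrk hkd hdvd, mul_one]
    have hg1 : ‖((belyiMap d k η γ)^[1] 1 : ℚ_[p])‖ = ‖(η : ℚ_[p])‖ := by
      rw [iterate_one, belyiMap, Rat.cast_add, Rat.cast_mul,
        IsUltrametricDist.norm_add_eq_left_of_norm_lt (hηB ▸ hγ.trans_lt hη), hηB]
    exact belyiMap_iterate_ne_iterate hkp hrk hkd hrd hdvd hnd hη.le
      (by rw [hg1]; exact ⟨hη, hγ.trans hη.le⟩) h1lt h1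
  have h_zero_escapes : ¬ (1 ≤ ‖(η : ℚ_[p])‖ ∧ 1 < ‖(γ : ℚ_[p])‖) := fun ⟨hη, hγ⟩ =>
    belyiMap_iterate_ne_iterate hkp hrk hkd hrd hdvd hnd hη (j := 1)
      (by rw [iterate_one, belyiMap_zero hkd]; exact ⟨hγ, le_rfl⟩) h0lt h0
  rw [← Padic.norm_ratCast_le_one_iff, ← Padic.norm_ratCast_le_one_iff, ← and_assoc,
    ← Padic.one_lt_norm_ratCast_iff, ← Padic.norm_ratCast_lt_one_iff]
  rcases le_or_gt ‖(γ : ℚ_[p])‖ 1 with hγ | hγ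
  · exact Or.inl ⟨le_of_not_gt fun hη => h_one_escapes ⟨hη, hγ⟩, hγ⟩
  · exact Or.inr ⟨hγ, lt_of_not_ge fun hη => h_zero_escapes ⟨hη, hγ⟩⟩

/-- (Preperiodic case.)  If both critical points `0` and `1` are
preperiodic for `f_{η,γ}`, then either both `η` and `γ` are `p`-integral, or
`v_p(γ) < 0` and `η = 0` or `v_p(η) > 0`. -/
theorem pcf_preperiodic_params (d k p : ℕ) (hd : 3 ≤ d) (hk1 : 1 ≤ k)
    (hk2 : k ≤ (d - 1) / 2) (hp : IsIDFPrime d k p)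
    (η γ : ℚ) (n₀ m₀ n₁ m₁ : ℕ) (h0lt : m₀ < n₀) (h1lt : m₁ < n₁)
    (h0 : (belyiMap d k η γ)^[n₀] 0 = (belyiMap d k η γ)^[m₀] 0)
    (h1 : (belyiMap d k η γ)^[n₁] 1 = (belyiMap d k η γ)^[m₁] 1) :
    (PIntegral p η ∧ PIntegral p γ) ∨
      (γ ≠ 0 ∧ padicValRat p γ < 0 ∧ (η = 0 ∨ 0 < padicValRat p η)) :=
  pcf_preperiodic_params_general d k p hd hk2 hp η γ n₀ m₀ n₁ m₁ h0lt h1lt h0 h1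
end

section
/- Let K be an algebraically closed field of characteristic 0 and let g ∈ K[z] be a bicritical polynomial of degree d ≥ 3 (i.e., the derivative g′ has exactly two distinct roots in K). Then there exist an integer k with 1 ≤ k ≤ ⌈(d−2)/2⌉, elements a, c ∈ K with a ≠ 0, and an affine map φ(z) = u·z + v with u, v ∈ K, u ≠ 0, such that g(φ(z)) = φ(a·B_{d,k}(z) + c) for all z ∈ K; that is, g is conjugate to a·B_{d,k}(z) + c, where B_{d,k} is viewed in K[z] via the embedding ℚ ↪ K. -/
open Finset Function

/-- The normalized dynamical Belyi polynomial `B_{d,k}` as a function on a field `K` of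
characteristic zero, via the embedding `ℚ ↪ K`. -/
def belyiK (K : Type*) [Field K] [CharZero K] (d k : ℕ) (z : K) : K :=
  ∑ i ∈ Finset.range (k + 1), ((belyiCoeff d k i : ℚ) : K) * z ^ (d - i)

/-! Write `g' = ℓ (z - v)^(d-1-k) (z - w)^k` with `k` the smaller critical multiplicity.
Since `B_{d,k}' = β z^(d-1-k) (z - 1)^k`, conjugating by `φ z = (w - v) z + v` sends the
critical points to `0` and `1`, so for a suitable `a` the polynomials `g ∘ φ` and
`φ ∘ (a B_{d,k} + c)` have the same derivative; choosing `c` so that they agree at `0` makes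
them equal in characteristic zero. -/

open Polynomial

def belyiDerivCoeff (d k : ℕ) : ℚ :=
  (-1) ^ k * (∏ j ∈ range (k + 1), ((d : ℚ) - j)) / k.factorial

noncomputable def belyiPoly (d k : ℕ) : ℚ[X] :=
  ∑ i ∈ range (k + 1), C (belyiCoeff d k i) * X ^ (d - i)

theorem belyiCoeff_mul_sub {d k i : ℕ} (hi : i ≤ k) :
    belyiCoeff d k i * ((d : ℚ) - i) = belyiDerivCoeff d k * (-1) ^ i * k.choose i := by
  have hsign : (-1 : ℚ) ^ (k - i) * (-1) ^ i = (-1) ^ k := by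
    rw [← pow_add, Nat.sub_add_cancel hi]
  have hprod := mul_prod_erase (range (k + 1)) (fun j : ℕ ↦ (d : ℚ) - j)
    (mem_range.2 (Nat.lt_succ_of_le hi))
  unfold belyiCoeff belyiDerivCoeff
  rw [Nat.cast_choose ℚ hi, ← hprod, ← hsign]
  field_simp
  rw [← pow_mul, pow_mul', neg_one_sq, one_pow, mul_one]

theorem derivative_belyiPoly {d k : ℕ} (hkd : k < d) :
    derivative (belyiPoly d k) = C (belyiDerivCoeff d k) * X ^ (d - 1 - k) * (X - 1) ^ k := by
  rw [sub_eq_neg_add, add_pow, mul_sum, belyiPoly, derivative_sum]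
  refine sum_congr rfl fun i hi ↦ ?_
  have hik : i ≤ k := Nat.lt_succ_iff.mp (mem_range.mp hi)
  rw [derivative_C_mul_X_pow, Nat.cast_sub (by omega : i ≤ d), belyiCoeff_mul_sub hik,
    show d - i - 1 = d - 1 - k + (k - i) by omega, pow_add]
  simp only [C_mul, C_pow, C_neg, C_1, ← C_eq_natCast]
  ring

theorem belyiDerivCoeff_ne_zero {d k : ℕ} (hkd : k < d) : belyiDerivCoeff d k ≠ 0 := by
  refine div_ne_zero (mul_ne_zero (by simp) (prod_ne_zero_iff.2 fun j hj ↦ ?_)) (by positivity)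
  have : j < d := (Nat.lt_succ_iff.mp (mem_range.mp hj)).trans_lt hkd
  exact sub_ne_zero.2 (by exact_mod_cast this.ne')

theorem belyiK_zero (K : Type*) [Field K] [CharZero K] {d k : ℕ} (hkd : k < d) :
    belyiK K d k 0 = 0 :=
  sum_eq_zero fun i hi ↦ by rw [zero_pow (by have := mem_range.mp hi; omega), mul_zero]

theorem eval_map_belyiPoly (K : Type*) [Field K] [CharZero K] (d k : ℕ) (z : K) :
    ((belyiPoly d k).map (algebraMap ℚ K)).eval z = belyiK K d k z := by
  simp [belyiPoly, belyiK, Polynomial.map_sum, eval_finsetSum, eq_ratCast]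

theorem Polynomial.eq_of_derivative_eq_of_eval_eq {R : Type*} [CommRing R] [IsAddTorsionFree R]
    {p q : R[X]} {x : R} (hd : derivative p = derivative q) (hx : p.eval x = q.eval x) :
    p = q := by
  have hC := eq_C_of_derivative_eq_zero
    (by rw [derivative_sub, hd, sub_self] : derivative (p - q) = 0)
  have h0 : (p - q).coeff 0 = 0 := by simpa [hx] using (congrArg (eval x) hC).symm
  rw [h0, C_0] at hC
  exact sub_eq_zero.mp hC

theorem Polynomial.exists_eq_C_mul_X_sub_C_pow_mul_X_sub_C_pow {K : Type*} [Field K]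
    [IsAlgClosed K] [DecidableEq K] {p : K[X]} {x y : K} (hxy : x ≠ y)
    (hroots : p.roots.toFinset = {x, y}) :
    ∃ m n : ℕ, 0 < m ∧ 0 < n ∧ m + n = p.natDegree ∧
      p = C p.leadingCoeff * ((X - C x) ^ m * (X - C y) ^ n) := by
  have hmem : ∀ z ∈ ({x, y} : Finset K), 0 < p.roots.count z := fun z hz ↦
    Multiset.count_pos.mpr (Multiset.mem_toFinset.mp (hroots ▸ hz))
  refine ⟨p.roots.count x, p.roots.count y, hmem x (by simp), hmem y (by simp), ?_, ?_⟩
  · rw [← IsAlgClosed.card_roots_eq_natDegree, ← Multiset.toFinset_sum_count_eq, hroots,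
      sum_pair hxy]
  · conv_lhs => rw [← C_leadingCoeff_mul_prod_multiset_X_sub_C
      (IsAlgClosed.card_roots_eq_natDegree (p := p))]
    rw [prod_multiset_map_count, hroots, prod_pair hxy]

theorem exists_belyi_conjugate {K : Type*} [Field K] [CharZero K] {d k : ℕ} (hkd : k < d)
    {g : K[X]} {lc v w : K} (hlc : lc ≠ 0) (hvw : v ≠ w)
    (hg : derivative g = C lc * ((X - C v) ^ (d - 1 - k) * (X - C w) ^ k)) :
    ∃ a c : K, a ≠ 0 ∧
      ∀ z : K, g.eval ((w - v) * z + v) = (w - v) * (a * belyiK K d k z + c) + v := by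
  set u := w - v
  have hu : u ≠ 0 := sub_ne_zero.2 hvw.symm
  set β : K := (belyiDerivCoeff d k : K)
  have hβ : β ≠ 0 := Rat.cast_ne_zero.2 (belyiDerivCoeff_ne_zero hkd)
  set B := (belyiPoly d k).map (algebraMap ℚ K)
  set a := lc * u ^ (d - 1) / β
  set c := (g.eval v - v) / u
  have hB : derivative B = C β * X ^ (d - 1 - k) * (X - 1) ^ k := by
    simp [B, β, derivative_map, derivative_belyiPoly hkd]
  have hφ_v : (C u * X + C v - C v : K[X]) = C u * X := by ring
  have hφ_w : (C u * X + C v - C w : K[X]) = C u * (X - 1) := by simp [u, C_sub]; ring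
  have hconj : g.comp (C u * X + C v) = C u * (C a * B + C c) + C v := by
    refine eq_of_derivative_eq_of_eval_eq (x := 0) ?_ ?_
    · have hpow : lc * (u ^ (d - 1 - k) * u ^ k) = a * β := by
        rw [div_mul_cancel₀ _ hβ, ← pow_add, Nat.sub_add_cancel (by omega)]
      have hpowC := congrArg C hpow
      simp only [C_mul, C_pow] at hpowC
      simp only [derivative_comp, hg, hB, derivative_add, derivative_mul, derivative_C,
        derivative_X, mul_comp, pow_comp, sub_comp, X_comp, C_comp, hφ_v, hφ_w, mul_pow]
      linear_combination (C u * X ^ (d - 1 - k) * (X - 1) ^ k) * hpowC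
    · simp only [eval_comp, eval_add, eval_mul, eval_C, eval_X, B, eval_map_belyiPoly,
        belyiK_zero K hkd, mul_zero, zero_add, c]
      field_simp
      ring
  refine ⟨a, c, div_ne_zero (mul_ne_zero hlc (pow_ne_zero _ hu)) hβ, fun z ↦ ?_⟩
  simpa only [eval_comp, eval_add, eval_mul, eval_C, eval_X, B, eval_map_belyiPoly]
    using congrArg (Polynomial.eval z) hconj

theorem bicritical_belyi_normal_form_general (K : Type*) [Field K] [CharZero K] [IsAlgClosed K]
    [DecidableEq K]
    (d : ℕ) (g : Polynomial K) (hdeg : g.natDegree = d)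
    (hbc : g.derivative.roots.toFinset.card = 2) :
    ∃ k : ℕ, 1 ≤ k ∧ k ≤ (d - 1) / 2 ∧
      ∃ a c u v : K, a ≠ 0 ∧ u ≠ 0 ∧
        ∀ z : K, g.eval (u * z + v) = u * (a * belyiK K d k z + c) + v := by
  obtain ⟨x, y, hxy, hroots⟩ := card_eq_two.mp hbc
  obtain ⟨m, n, hm, hn, hmn, hfac⟩ := exists_eq_C_mul_X_sub_C_pow_mul_X_sub_C_pow hxy hroots
  rw [natDegree_derivative, hdeg] at hmn
  have hlc : g.derivative.leadingCoeff ≠ 0 :=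
    leadingCoeff_ne_zero.mpr (derivative_ne_zero.mpr (by omega))
  rcases le_total m n with hle | hle
  · refine ⟨m, hm, by omega, ?_⟩
    obtain ⟨a, c, ha, hconj⟩ := exists_belyi_conjugate (d := d) (k := m) (v := y) (w := x)
      (by omega) hlc hxy.symm (hfac.trans (by rw [show d - 1 - m = n by omega, mul_comm (_ ^ m)]))
    exact ⟨a, c, x - y, y, ha, sub_ne_zero.2 hxy, hconj⟩
  · refine ⟨n, hn, by omega, ?_⟩
    obtain ⟨a, c, ha, hconj⟩ := exists_belyi_conjugate (d := d) (k := n) (v := x) (w := y)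
      (by omega) hlc hxy (hfac.trans (by rw [show d - 1 - n = m by omega]))
    exact ⟨a, c, y - x, x, ha, sub_ne_zero.2 hxy.symm, hconj⟩

/-- (Belyi normal form for bicritical polynomials.)  Every bicritical
polynomial of degree `d ≥ 3` over an algebraically closed field of characteristic zero
is affinely conjugate to `a · B_{d,k}(z) + c` for some `1 ≤ k ≤ ⌈(d-2)/2⌉` and `a ≠ 0`. -/
theorem bicritical_belyi_normal_form (K : Type*) [Field K] [CharZero K] [IsAlgClosed K]
    [DecidableEq K]
    (d : ℕ) (hd : 3 ≤ d) (g : Polynomial K) (hdeg : g.natDegree = d)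
    (hbc : g.derivative.roots.toFinset.card = 2) :
    ∃ k : ℕ, 1 ≤ k ∧ k ≤ (d - 1) / 2 ∧
      ∃ a c u v : K, a ≠ 0 ∧ u ≠ 0 ∧
        ∀ z : K, g.eval (u * z + v) = u * (a * belyiK K d k z + c) + v :=
  bicritical_belyi_normal_form_general K d g hdeg hbc
end

section
/- For every integer d ≥ 5, there exists an IDF prime for the pair (d, 2); equivalently, there exists a prime p > 2 such that either p divides d, or p divides d−2 with v_p(d−2) odd. -/
open Finset Function

/-! If an odd prime `p` divides `d`, it is an IDF prime with `r = 0`. Otherwise `d ≥ 5` is a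
power of two, so `8 ∣ d` and `d - 2 = 2t` with `t ≡ 3 (mod 4)`. Such a `t` is not a sum of two
squares, so by Fermat's criterion some prime `q ≡ 3 (mod 4)` has odd valuation in `t`, hence in
`d - 2`, and `q` is an IDF prime with `r = 2`. -/

theorem Nat.sq_add_sq_mod_four_ne_three (x y : ℕ) : (x ^ 2 + y ^ 2) % 4 ≠ 3 := by
  have hx := Nat.pow_mod x 2 4
  have hy := Nat.pow_mod y 2 4
  have : x % 4 < 4 := Nat.mod_lt _ (by norm_num)
  have : y % 4 < 4 := Nat.mod_lt _ (by norm_num)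
  interval_cases x % 4 <;> interval_cases y % 4 <;> omega

theorem Nat.exists_prime_mod_four_eq_three_odd_padicValNat {n : ℕ} (hn : n % 4 = 3) :
    ∃ q, q.Prime ∧ q % 4 = 3 ∧ Odd (padicValNat q n) := by
  by_contra! h
  obtain ⟨x, y, hxy⟩ := Nat.eq_sq_add_sq_iff.mpr fun q hq hq4 =>
    Nat.not_odd_iff_even.mp (h q (Nat.prime_of_mem_primeFactors hq) hq4)
  exact Nat.sq_add_sq_mod_four_ne_three x y (hxy ▸ hn)

theorem isIDFPrime_of_dvd {d k p : ℕ} (hp : p.Prime) (hkp : k < p) (hd : d ≠ 0) (hpd : p ∣ d) :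
    IsIDFPrime d k p := by
  have : Fact p.Prime := ⟨hp⟩
  refine ⟨hp, hkp, 0, Nat.zero_le k, hpd, ?_⟩
  rw [Nat.sub_zero, zero_dvd_iff]
  exact Nat.one_le_iff_ne_zero.mp (one_le_padicValNat_of_dvd hd hpd)

theorem isIDFPrime_two_of_odd_padicValNat {d p : ℕ} (hp : p.Prime) (hp2 : 2 < p)
    (hodd : Odd (padicValNat p (d - 2))) : IsIDFPrime d 2 p :=
  have : Fact p.Prime := ⟨hp⟩
  ⟨hp, hp2, 2, le_rfl, dvd_of_one_le_padicValNat hodd.pos, hodd.not_two_dvd_nat⟩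

theorem exists_isIDFPrime_two_of_eight_dvd {d : ℕ} (hd : d ≠ 0) (h8 : 8 ∣ d) :
    ∃ p, IsIDFPrime d 2 p := by
  have hsub : d - 2 = 2 * (d / 2 - 1) := by omega
  have hmod : (d / 2 - 1) % 4 = 3 := by omega
  obtain ⟨q, hq, hq4, hodd⟩ := Nat.exists_prime_mod_four_eq_three_odd_padicValNat hmod
  have : Fact q.Prime := ⟨hq⟩
  have hval : padicValNat q (d - 2) = padicValNat q (d / 2 - 1) := by
    rw [hsub, padicValNat.mul two_ne_zero (by omega), padicValNat_primes (by omega), zero_add]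
  exact ⟨q, isIDFPrime_two_of_odd_padicValNat hq (by omega) (hval ▸ hodd)⟩

theorem eight_dvd_of_forall_odd_prime_not_dvd {d : ℕ} (hd : 5 ≤ d)
    (h : ∀ p, p.Prime → 2 < p → ¬ p ∣ d) : 8 ∣ d := by
  obtain ⟨m, rfl⟩ : ∃ m, d = 2 ^ m := ⟨_, Nat.eq_prime_pow_of_unique_prime_dvd (by omega)
    fun hp hpd => (hp.two_le.eq_or_lt.resolve_right fun h2 => h _ hp h2 hpd).symm⟩
  have hm : 3 ≤ m := by
    by_contra! hm
    have := Nat.pow_le_pow_right two_pos (Nat.le_of_lt_succ hm)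
    omega
  exact Nat.pow_dvd_pow 2 hm

/-- For every `d ≥ 5` there exists an IDF prime for `(d, 2)`. -/
theorem exists_IDFPrime_k_eq_two (d : ℕ) (hd : 5 ≤ d) : ∃ p : ℕ, IsIDFPrime d 2 p := by
  by_cases h : ∃ p, p.Prime ∧ 2 < p ∧ p ∣ d
  · obtain ⟨p, hp, hp2, hpd⟩ := h
    exact ⟨p, isIDFPrime_of_dvd hp hp2 (by omega) hpd⟩
  · push Not at h
    exact exists_isIDFPrime_two_of_eight_dvd (by omega)
      (eight_dvd_of_forall_odd_prime_not_dvd hd h)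
end
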